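/- arXiv:1204.4877 — 8 statements merged into one kernel-verified Lean document; each statement's English description precedes it below -/
import Mathlib

section
/- Let d ∈ ℕ and let {Q_t^i}_{i≥1, t∈[0,1]} be a family of linear operators on ⋃_{p≥0} C_p satisfying assumption (M). Then for every p ∈ ℕ, every constant C > 0 and every nonnegative function f with f(x) ≤ M(1+‖x‖^{2p}) for all x, there is a constant D (depending only on M, C, p and the constants in assumption (M), but not on n, k, x or the partition) such that for every n ∈ ℕ, every partition 0 = t_0 < t_1 < ⋯ < t_n = 1 with n·max_{1≤i≤n}(t_i − t_{i−1}) ≤ C, and every 1 ≤ k ≤ n, one has (Q^1_{t_1−t_0} Q^2_{t_2−t_1} ⋯ Q^{k−1}_{t_{k−1}−t_{k−2}} f)(x) ≤ D(1+‖x‖^{2p}) for all x ∈ ℝ^d. -/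
open MeasureTheory Filter Set

/-- Composition of operators: `opCompFrom A s a j f = A^{a+1}_{s(a+1)} ⋯ A^{a+j}_{s(a+j)} f`,
i.e. the product `∏_{i=a+1}^{a+j} A^i_{s i}` applied to `f`. -/
def opCompFrom {E : Type*} (A : ℕ → ℝ → (E → ℝ) → (E → ℝ)) (s : ℕ → ℝ) :
    ℕ → ℕ → (E → ℝ) → (E → ℝ)
  | _, 0, f => f
  | a, j + 1, f => A (a + 1) (s (a + 1)) (opCompFrom A s (a + 1) j f)

/-- Assumption (M) for a family of operators `Q i t` on the spaces `C_p`. -/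
def AssumptionM {E : Type*} [NormedAddCommGroup E]
    (Q : ℕ → ℝ → (E → ℝ) → (E → ℝ)) : Prop :=
  -- (M₀), boundedness on `C_p`, `p ≥ 2`, uniformly in `i` and `t ∈ [0,1]`
  (∀ p : ℕ, 2 ≤ p → ∃ K > 0, ∀ i : ℕ, ∀ t ∈ Set.Icc (0:ℝ) 1, ∀ (f : E → ℝ) (Cf : ℝ),
      (∀ x, |f x| ≤ Cf * (1 + ‖x‖ ^ p)) → ∀ x, |Q i t f x| ≤ K * Cf * (1 + ‖x‖ ^ p)) ∧
  -- positivity and monotonicity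
  (∀ i : ℕ, ∀ t ∈ Set.Icc (0:ℝ) 1, ∀ f g : E → ℝ, (∀ x, 0 ≤ f x) → (∀ x, f x ≤ g x) →
      (∀ x, 0 ≤ Q i t f x) ∧ (∀ x, Q i t f x ≤ Q i t g x)) ∧
  -- `Q 1 = 1`
  (∀ i : ℕ, ∀ t ∈ Set.Icc (0:ℝ) 1, Q i t (fun _ => (1:ℝ)) = fun _ => (1:ℝ)) ∧
  -- moment growth condition: `Q f_p ≤ (1 + K_p t) f_p + K'_p t` with `f_p x = ‖x‖^p`
  (∀ p : ℕ, ∃ Kp, 0 ≤ Kp ∧ ∃ Kp', 0 ≤ Kp' ∧ ∀ i : ℕ, ∀ t ∈ Set.Icc (0:ℝ) 1, ∀ x : E,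
      Q i t (fun y => ‖y‖ ^ p) x ≤ (1 + Kp * t) * ‖x‖ ^ p + Kp' * t)

/-- Lemma `L_Bounded_Product_Q`: under assumption (M), the compositions
`Q^1_{t_1-t_0} ⋯ Q^{k-1}_{t_{k-1}-t_{k-2}} f` are bounded by `D (1 + ‖x‖^{2p})`, uniformly
over all `n`, all partitions `0 = t_0 < ⋯ < t_n = 1` with `n·max (t_i - t_{i-1}) ≤ C`,
and all `1 ≤ k ≤ n`. -/
theorem stmt_0 (d : ℕ) (Q : ℕ → ℝ → ((EuclideanSpace ℝ (Fin d)) → ℝ) → ((EuclideanSpace ℝ (Fin d)) → ℝ))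
    (hlin_add : ∀ i t (f g : EuclideanSpace ℝ (Fin d) → ℝ), Q i t (f + g) = Q i t f + Q i t g)
    (hlin_smul : ∀ i t (c : ℝ) (f : EuclideanSpace ℝ (Fin d) → ℝ), Q i t (c • f) = c • Q i t f)
    (hM : AssumptionM Q)
    (p : ℕ) (C : ℝ) (hC : 0 < C) (M : ℝ) (f : EuclideanSpace ℝ (Fin d) → ℝ)
    (hf0 : ∀ x, 0 ≤ f x) (hfM : ∀ x, f x ≤ M * (1 + ‖x‖ ^ (2 * p))) :
    ∃ D : ℝ, ∀ (n : ℕ) (t : ℕ → ℝ), t 0 = 0 → t n = 1 →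
      (∀ i < n, t i < t (i + 1)) →
      (∀ i, 1 ≤ i → i ≤ n → (n : ℝ) * (t i - t (i - 1)) ≤ C) →
      ∀ k, 1 ≤ k → k ≤ n → ∀ x,
        opCompFrom Q (fun i => t i - t (i - 1)) 0 (k - 1) f x ≤ D * (1 + ‖x‖ ^ (2 * p)) := by
  obtain ⟨hM0, hMono, hOne, hMom⟩ := hM
  obtain ⟨Kp, hKp, Kp', hKp', hmom⟩ := hMom (2 * p)
  set L : ℝ := Kp + Kp' with hLdef
  have hL0 : 0 ≤ L := by positivity
  have hMnn : 0 ≤ M := by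
    have h0 := hf0 0
    have h1 := hfM 0
    nlinarith [pow_nonneg (norm_nonneg (0 : EuclideanSpace ℝ (Fin d))) (2 * p)]
  refine ⟨M * Real.exp L, ?_⟩
  intro n t ht0 htn hinc _ k hk1 hkn x
  have hmono : ∀ i j, i ≤ j → j ≤ n → t i ≤ t j := by
    intro i j hij hjn
    induction j with
    | zero =>
      have : i = 0 := Nat.le_zero.mp hij
      simp [this]
    | succ m ih =>
      rcases Nat.lt_or_ge i (m + 1) with h | h
      · have h1 := hinc m (by omega)
        have h2 := ih (by omega) (by omega)
        linarith
      · have : i = m + 1 := by omega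
        simp [this]
  have key : ∀ j a, a + j ≤ n - 1 →
      (∀ y, 0 ≤ opCompFrom Q (fun i => t i - t (i - 1)) a j f y) ∧
      (∀ y, opCompFrom Q (fun i => t i - t (i - 1)) a j f y ≤
        M * Real.exp (L * (t (a + j) - t a)) * (1 + ‖y‖ ^ (2 * p))) := by
    intro j
    induction j with
    | zero =>
      intro a _
      refine ⟨fun y => hf0 y, fun y => ?_⟩
      simp only [opCompFrom, Nat.add_zero, sub_self, mul_zero, Real.exp_zero, mul_one]
      exact hfM y
    | succ j ih =>
      intro a ha
      obtain ⟨ihpos, ihbd⟩ := ih (a + 1) (by omega)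
      have hs : t (a + 1) - t (a + 1 - 1) = t (a + 1) - t a := by norm_num
      have hδ : t (a + 1) - t (a + 1 - 1) ∈ Set.Icc (0 : ℝ) 1 := by
        rw [hs]
        constructor
        · have := hmono a (a + 1) (by omega) (by omega); linarith
        · have h1 := hmono 0 a (by omega) (by omega)
          have h2 := hmono (a + 1) n (by omega) (le_refl n)
          rw [ht0] at h1; rw [htn] at h2; linarith
      set A : ℝ := M * Real.exp (L * (t (a + 1 + j) - t (a + 1))) with hAdef
      have hA0 : 0 ≤ A := by positivity
      set h : EuclideanSpace ℝ (Fin d) → ℝ := opCompFrom Q (fun i => t i - t (i - 1)) (a + 1) j f with hh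
      obtain ⟨hpos, hle⟩ := hMono (a + 1) (t (a + 1) - t (a + 1 - 1)) hδ h
        (fun y => A * (1 + ‖y‖ ^ (2 * p))) ihpos ihbd
      have hg : (fun y : EuclideanSpace ℝ (Fin d) => A * (1 + ‖y‖ ^ (2 * p)))
          = A • ((fun _ : EuclideanSpace ℝ (Fin d) => (1 : ℝ)) + fun y => ‖y‖ ^ (2 * p)) := by
        funext y; simp [mul_add]
      have hQg : ∀ z, Q (a + 1) (t (a + 1) - t (a + 1 - 1))
          (fun y => A * (1 + ‖y‖ ^ (2 * p))) z
          = A * (1 + Q (a + 1) (t (a + 1) - t (a + 1 - 1)) (fun y => ‖y‖ ^ (2 * p)) z) := by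
        intro z
        rw [hg, hlin_smul, hlin_add, hOne (a + 1) _ hδ]
        simp [mul_add]
      constructor
      · intro y
        exact hpos y
      · intro y
        have step1 : opCompFrom Q (fun i => t i - t (i - 1)) a (j + 1) f y
            = Q (a + 1) (t (a + 1) - t (a + 1 - 1)) h y := rfl
        have step2 := hle y
        rw [hQg y] at step2
        have hmm := hmom (a + 1) (t (a + 1) - t (a + 1 - 1)) hδ y
        set δ : ℝ := t (a + 1) - t (a + 1 - 1) with hδdef
        have hδ0 : 0 ≤ δ := hδ.1
        have hu : 0 ≤ ‖y‖ ^ (2 * p) := pow_nonneg (norm_nonneg y) (2 * p)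
        have step3 : A * (1 + Q (a + 1) δ (fun z => ‖z‖ ^ (2 * p)) y)
            ≤ A * (1 + L * δ) * (1 + ‖y‖ ^ (2 * p)) := by
          have h1 : A * (1 + Q (a + 1) δ (fun z => ‖z‖ ^ (2 * p)) y)
              ≤ A * (1 + ((1 + Kp * δ) * ‖y‖ ^ (2 * p) + Kp' * δ)) :=
            mul_le_mul_of_nonneg_left (by linarith) hA0
          have h2 : (1 + ((1 + Kp * δ) * ‖y‖ ^ (2 * p) + Kp' * δ))
              ≤ (1 + L * δ) * (1 + ‖y‖ ^ (2 * p)) := by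
            have hnn : 0 ≤ Kp' * δ + Kp * δ + Kp' * δ * ‖y‖ ^ (2 * p) := by positivity
            rw [hLdef]; nlinarith
          have h3 := le_of_le_of_eq (mul_le_mul_of_nonneg_left h2 hA0) (by ring :
            A * ((1 + L * δ) * (1 + ‖y‖ ^ (2 * p))) = A * (1 + L * δ) * (1 + ‖y‖ ^ (2 * p)))
          linarith
        have step4 : A * (1 + L * δ) * (1 + ‖y‖ ^ (2 * p))
            ≤ A * Real.exp (L * δ) * (1 + ‖y‖ ^ (2 * p)) := by
          have he : 1 + L * δ ≤ Real.exp (L * δ) := by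
            have := Real.add_one_le_exp (L * δ); linarith
          exact mul_le_mul_of_nonneg_right (mul_le_mul_of_nonneg_left he hA0) (by positivity)
        have step5 : A * Real.exp (L * δ)
            = M * Real.exp (L * (t (a + (j + 1)) - t a)) := by
          rw [hAdef, hs, mul_assoc, ← Real.exp_add]
          congr 2
          have : a + (j + 1) = a + 1 + j := by omega
          rw [this]; ring
        rw [step1]
        calc Q (a + 1) δ h y ≤ A * (1 + Q (a + 1) δ (fun z => ‖z‖ ^ (2 * p)) y) := step2
          _ ≤ A * (1 + L * δ) * (1 + ‖y‖ ^ (2 * p)) := step3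
          _ ≤ A * Real.exp (L * δ) * (1 + ‖y‖ ^ (2 * p)) := step4
          _ = M * Real.exp (L * (t (a + (j + 1)) - t a)) * (1 + ‖y‖ ^ (2 * p)) := by
              rw [step5]
  obtain ⟨-, hbd⟩ := key (k - 1) 0 (by omega)
  have := hbd x
  have hE : Real.exp (L * (t (0 + (k - 1)) - t 0)) ≤ Real.exp L := by
    apply Real.exp_le_exp.mpr
    have h1 := hmono (0 + (k - 1)) n (by omega) (le_refl n)
    have h2 := hmono 0 0 (le_refl 0) (by omega)
    rw [htn] at h1
    rw [ht0]
    nlinarith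
  have hu : 0 ≤ 1 + ‖x‖ ^ (2 * p) := by positivity
  have hfin : M * Real.exp (L * (t (0 + (k - 1)) - t 0)) * (1 + ‖x‖ ^ (2 * p))
      ≤ M * Real.exp L * (1 + ‖x‖ ^ (2 * p)) :=
    mul_le_mul_of_nonneg_right (mul_le_mul_of_nonneg_left hE hMnn) hu
  linarith
end

section
/- Let d ∈ ℕ, m ≥ 2, p ≥ 2, and let {P̄_t^i}_{i≥1,t∈[0,1]} and {Q_t^i}_{i≥1,t∈[0,1]} be families of linear operators on ⋃_{q≥0} C_q, both satisfying assumption (M), and satisfying assumptions (R(m,δ_m)) and (M_P). Then for every f ∈ C_p^{2(m+1)} there is a constant K(x) > 0 (depending on x, p, m and the constants in the assumptions, but not on n or the partition) such that for every partition 0 = t_0 < t_1 < ⋯ < t_n = 1, |(P̄^1_{t_1−t_0} P̄^2_{t_2−t_1} ⋯ P̄^n_{1−t_{n−1}} f)(x) − (Q^1_{t_1−t_0} Q^2_{t_2−t_1} ⋯ Q^n_{1−t_{n−1}} f)(x)| ≤ K(x) ‖f‖_{C_p^{2(m+1)}} Σ_{k=1}^n (t_k − t_{k−1}) δ_m(t_k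 − t_{k−1}). -/
open MeasureTheory Filter Set

/-- `f ∈ C_p^R` with `‖f‖_{C_p^R} ≤ N` : `f` is `C^R` and all its derivatives of order `≤ R`
are bounded by `N (1 + ‖x‖^p)`. -/
def InCpm {E : Type*} [NormedAddCommGroup E] [NormedSpace ℝ E]
    (p R : ℕ) (N : ℝ) (f : E → ℝ) : Prop :=
  ContDiff ℝ (R : ℕ∞) f ∧ ∀ j ≤ R, ∀ x, ‖iteratedFDeriv ℝ j f x‖ ≤ N * (1 + ‖x‖ ^ p)

/-!
Telescoping: the difference of the two products is the sum over `k` of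
`Q^1 ⋯ Q^{k-1} (P̄^k - Q^k) P̄^{k+1} ⋯ P̄^n f`. By (M_P) the tail `P̄^{k+1} ⋯ P̄^n f` stays in
`C_p^{2(m+1)}` with a uniformly controlled norm, so (R(m,δ_m)) bounds the middle factor by
`K' (t_k - t_{k-1}) δ_m(t_k - t_{k-1}) ‖f‖ (1 + ‖·‖^q)`. By the moment condition (M)(iii), the
weight `w = 1 + ‖·‖^q` is a Lyapunov function, `Q^i_t w ≤ e^{M t} w`, and since the `Q^i_t` are
positive the head `Q^1 ⋯ Q^{k-1}` multiplies the bound by at most `e^{M t_{k-1}} ≤ e^M`.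
-/

open Finset Real

section Operator

variable {E : Type*} {T : (E → ℝ) → (E → ℝ)}

lemma monotone_of_map_add_of_nonneg (hadd : ∀ f g, T (f + g) = T f + T g)
    (hpos : ∀ f, 0 ≤ f → 0 ≤ T f) : Monotone T := by
  intro f g hfg
  have hsub : T (g - f) = T g - T f := map_sub (AddMonoidHom.mk' T hadd) g f
  have h := hpos (g - f) (sub_nonneg.2 hfg)
  rwa [hsub, sub_nonneg] at h

lemma abs_apply_le_of_abs_le (hsmul : ∀ (c : ℝ) f, T (c • f) = c • T f) (hmono : Monotone T)
    {g w : E → ℝ} {c : ℝ}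
    (hg : ∀ y, |g y| ≤ c * w y) (y : E) : |T g y| ≤ c * T w y := by
  have hup : T g y ≤ c * T w y := by
    have h : T g y ≤ T (c • w) y := hmono (fun z => (abs_le.1 (hg z)).2) y
    rwa [hsmul] at h
  have hlo : -c * T w y ≤ T g y := by
    have h : T ((-c) • w) y ≤ T g y := hmono (fun z => by simpa using (abs_le.1 (hg z)).1) y
    rwa [hsmul] at h
  exact abs_le.2 ⟨by linarith, hup⟩

end Operator

section Composition

variable {E : Type*} (P Q : ℕ → ℝ → (E → ℝ) → (E → ℝ)) (s : ℕ → ℝ)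

lemma opCompFrom_succ_right (j a : ℕ) (f : E → ℝ) :
    opCompFrom Q s a (j + 1) f = opCompFrom Q s a j (Q (a + j + 1) (s (a + j + 1)) f) := by
  induction j generalizing a with
  | zero => rfl
  | succ j ih =>
    show Q (a + 1) (s (a + 1)) (opCompFrom Q s (a + 1) (j + 1) f) = _
    rw [ih, show a + 1 + j + 1 = a + (j + 1) + 1 by omega]
    rfl

variable {P Q s}

lemma opCompFrom_sub (hadd : ∀ i t f g, Q i t (f + g) = Q i t f + Q i t g) (j a : ℕ)
    (f g : E → ℝ) : opCompFrom Q s a j (f - g) = opCompFrom Q s a j f - opCompFrom Q s a j g := by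
  induction j generalizing a with
  | zero => rfl
  | succ j ih =>
    simp only [opCompFrom, ih]
    exact map_sub (AddMonoidHom.mk' _ (hadd _ _)) _ _

lemma opCompFrom_sub_opCompFrom_eq_sum (hadd : ∀ i t f g, Q i t (f + g) = Q i t f + Q i t g)
    (n : ℕ) (f : E → ℝ) :
    opCompFrom P s 0 n f - opCompFrom Q s 0 n f =
      ∑ k ∈ range n, opCompFrom Q s 0 k
        (P (k + 1) (s (k + 1)) (opCompFrom P s (k + 1) (n - (k + 1)) f) -
          Q (k + 1) (s (k + 1)) (opCompFrom P s (k + 1) (n - (k + 1)) f)) := by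
  set H : ℕ → E → ℝ := fun k => opCompFrom Q s 0 k (opCompFrom P s k (n - k) f)
  have hH0 : H 0 = opCompFrom P s 0 n f := rfl
  have hHn : H n = opCompFrom Q s 0 n f := by simp only [H, Nat.sub_self]; rfl
  rw [← hH0, ← hHn, ← sum_range_sub']
  refine sum_congr rfl fun k hk => ?_
  have hsplit : n - k = n - (k + 1) + 1 := by have := mem_range.1 hk; omega
  simp only [H, hsplit, opCompFrom_succ_right Q s k 0, zero_add, opCompFrom_sub hadd]
  rfl

lemma abs_opCompFrom_le (hsmul : ∀ i t (c : ℝ) f, Q i t (c • f) = c • Q i t f)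
    {w : E → ℝ} {M : ℝ} (a j : ℕ)
    (hmono : ∀ i < j, Monotone (Q (a + i + 1) (s (a + i + 1))))
    (hw : ∀ i < j, ∀ y, Q (a + i + 1) (s (a + i + 1)) w y ≤ exp (M * s (a + i + 1)) * w y)
    {c : ℝ} (hc : 0 ≤ c) {g : E → ℝ} (hg : ∀ y, |g y| ≤ c * w y) (y : E) :
    |opCompFrom Q s a j g y| ≤ c * exp (M * ∑ i ∈ range j, s (a + i + 1)) * w y := by
  induction j generalizing c g with
  | zero => simpa [opCompFrom] using hg y
  | succ j ih =>
    have hstep : ∀ z, |Q (a + j + 1) (s (a + j + 1)) g z| ≤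
        c * exp (M * s (a + j + 1)) * w z := fun z =>
      calc _ ≤ c * Q (a + j + 1) (s (a + j + 1)) w z :=
            abs_apply_le_of_abs_le (hsmul _ _) (hmono j j.lt_succ_self) hg z
        _ ≤ c * (exp (M * s (a + j + 1)) * w z) :=
            mul_le_mul_of_nonneg_left (hw j j.lt_succ_self z) hc
        _ = _ := by ring
    rw [opCompFrom_succ_right]
    refine (ih (fun i hi => hmono i (by omega)) (fun i hi => hw i (by omega))
      (by positivity) hstep).trans (le_of_eq ?_)
    rw [sum_range_succ, mul_add, exp_add]
    ring

theorem abs_opCompFrom_sub_opCompFrom_le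
    (hadd : ∀ i t f g, Q i t (f + g) = Q i t f + Q i t g)
    (hsmul : ∀ i t (c : ℝ) f, Q i t (c • f) = c • Q i t f) {w : E → ℝ} {M : ℝ} {n : ℕ}
    (hmono : ∀ i < n, Monotone (Q (i + 1) (s (i + 1))))
    (hw : ∀ i < n, ∀ y, Q (i + 1) (s (i + 1)) w y ≤ exp (M * s (i + 1)) * w y)
    (hM : 0 ≤ M) (hs : ∀ i < n, 0 ≤ s (i + 1)) {f : E → ℝ} {ε : ℕ → ℝ}
    (hε0 : ∀ k < n, 0 ≤ ε k)
    (hε : ∀ k < n, ∀ y, |P (k + 1) (s (k + 1)) (opCompFrom P s (k + 1) (n - (k + 1)) f) y -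
      Q (k + 1) (s (k + 1)) (opCompFrom P s (k + 1) (n - (k + 1)) f) y| ≤ ε k * w y)
    (y : E) (hwy : 0 ≤ w y) :
    |opCompFrom P s 0 n f y - opCompFrom Q s 0 n f y| ≤
      exp (M * ∑ i ∈ range n, s (i + 1)) * (∑ k ∈ range n, ε k) * w y := by
  have htele := congrFun (opCompFrom_sub_opCompFrom_eq_sum (P := P) (s := s) hadd n f) y
  simp only [Pi.sub_apply, Finset.sum_apply] at htele
  rw [htele, mul_sum, sum_mul]
  refine (abs_sum_le_sum_abs _ _).trans (sum_le_sum fun k hk => ?_)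
  have hk : k < n := mem_range.1 hk
  have hpartial : ∑ i ∈ range k, s (i + 1) ≤ ∑ i ∈ range n, s (i + 1) :=
    sum_le_sum_of_subset_of_nonneg (range_subset_range.2 hk.le)
      fun i hi _ => hs i (mem_range.1 hi)
  calc _ ≤ ε k * exp (M * ∑ i ∈ range k, s (0 + i + 1)) * w y :=
        abs_opCompFrom_le hsmul 0 k (fun i hi => by simpa using hmono i (by omega))
          (fun i hi => by simpa using hw i (by omega)) (hε0 k hk) (hε k hk) y
    _ ≤ ε k * exp (M * ∑ i ∈ range n, s (i + 1)) * w y := by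
        simp only [zero_add]
        gcongr
        exact hε0 k hk
    _ = _ := by ring

end Composition

lemma sub_le_sub_of_forall_le_succ {t : ℕ → ℝ} {n : ℕ} (hinc : ∀ i < n, t i ≤ t (i + 1))
    {i : ℕ} (hi : i < n) : t (i + 1) - t i ≤ t n - t 0 := by
  rw [← sum_range_sub]
  exact single_le_sum (f := fun k => t (k + 1) - t k)
    (fun k hk => sub_nonneg.2 (hinc k (mem_range.1 hk))) (mem_range.2 hi)

lemma sub_pred_mem_Icc_of_partition {t : ℕ → ℝ} {n : ℕ} (ht0 : t 0 = 0) (htn : t n = 1)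
    (hinc : ∀ i < n, t i < t (i + 1)) {i : ℕ} (hi : 1 ≤ i) (hin : i ≤ n) :
    t i - t (i - 1) ∈ Set.Icc (0 : ℝ) 1 := by
  obtain ⟨j, rfl⟩ : ∃ j, i = j + 1 := ⟨i - 1, by omega⟩
  have h := sub_le_sub_of_forall_le_succ (fun k hk => (hinc k hk).le) hin
  rw [Nat.add_sub_cancel]
  exact ⟨sub_nonneg.2 (hinc j hin).le, by linarith⟩

section Normed

variable {E : Type*} [NormedAddCommGroup E]

lemma AssumptionM.monotone {Q : ℕ → ℝ → (E → ℝ) → (E → ℝ)} (hQ : AssumptionM Q)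
    (hadd : ∀ i t f g, Q i t (f + g) = Q i t f + Q i t g) {i : ℕ} {t : ℝ} (ht : t ∈ Set.Icc 0 1) :
    Monotone (Q i t) :=
  monotone_of_map_add_of_nonneg (hadd i t) fun f hf =>
    (hQ.2.1 i t ht f f hf fun _ => le_rfl).1

lemma AssumptionM.exists_apply_one_add_norm_pow_le {Q : ℕ → ℝ → (E → ℝ) → (E → ℝ)}
    (hQ : AssumptionM Q) (hadd : ∀ i t f g, Q i t (f + g) = Q i t f + Q i t g) (q : ℕ) :
    ∃ M ≥ 0, ∀ i, ∀ t ∈ Set.Icc (0 : ℝ) 1, ∀ x,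
      Q i t (fun y => 1 + ‖y‖ ^ q) x ≤ exp (M * t) * (1 + ‖x‖ ^ q) := by
  obtain ⟨K, hK, K', hK', hmom⟩ := hQ.2.2.2 q
  refine ⟨K + K', by positivity, fun i t ht x => ?_⟩
  have hx : 0 ≤ ‖x‖ ^ q := by positivity
  have hKt : 0 ≤ K * t := mul_nonneg hK ht.1
  have hK't : 0 ≤ K' * t := mul_nonneg hK' ht.1
  calc Q i t ((fun _ => (1 : ℝ)) + fun y => ‖y‖ ^ q) x
      = 1 + Q i t (fun y => ‖y‖ ^ q) x := by rw [hadd, Pi.add_apply, hQ.2.2.1 i t ht]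
    _ ≤ (1 + (K + K') * t) * (1 + ‖x‖ ^ q) := by nlinarith [hmom i t ht x]
    _ ≤ exp ((K + K') * t) * (1 + ‖x‖ ^ q) := by
        gcongr
        linarith [add_one_le_exp ((K + K') * t)]

variable [NormedSpace ℝ E] {p R : ℕ} {N : ℝ} {f : E → ℝ}

lemma InCpm.nonneg (hf : InCpm p R N f) : 0 ≤ N := by
  have h := (norm_nonneg _).trans (hf.2 0 (Nat.zero_le R) 0)
  rw [norm_zero] at h
  exact nonneg_of_mul_nonneg_left h (by positivity)

lemma InCpm.mono (hf : InCpm p R N f) {N' : ℝ} (hN : N ≤ N') : InCpm p R N' f :=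
  ⟨hf.1, fun j hj x => (hf.2 j hj x).trans (by gcongr)⟩

end Normed

theorem stmt_1_general (d : ℕ) (m p : ℕ) (hp : 2 ≤ p)
    (P Q : ℕ → ℝ → ((EuclideanSpace ℝ (Fin d)) → ℝ) → ((EuclideanSpace ℝ (Fin d)) → ℝ))
    (hQlin_add : ∀ i t (f g : EuclideanSpace ℝ (Fin d) → ℝ), Q i t (f + g) = Q i t f + Q i t g)
    (hQlin_smul : ∀ i t (c : ℝ) (f : EuclideanSpace ℝ (Fin d) → ℝ), Q i t (c • f) = c • Q i t f)
    (hMQ : AssumptionM Q)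
    -- the function δ_m : increasing on [0,1], nonnegative, with δ_m(t)/t^{m-1} → 0 as t → 0⁺
    (δ : ℝ → ℝ)
    (hδ0 : ∀ t ∈ Set.Icc (0:ℝ) 1, 0 ≤ δ t)
    -- assumption (R(m,δ_m))
    (hR : ∀ p' : ℕ, 2 ≤ p' → ∃ q : ℕ, ∃ K' > 0, ∀ i : ℕ, ∀ t ∈ Set.Icc (0:ℝ) 1,
      ∀ (f : EuclideanSpace ℝ (Fin d) → ℝ) (Nf : ℝ), InCpm p' (2 * (m + 1)) Nf f →
        ∀ x, |P i t f x - Q i t f x| ≤ K' * t * δ t * Nf * (1 + ‖x‖ ^ q))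
    -- assumption (M_P)
    (hMPprod : ∃ C' > 0, ∀ (f : EuclideanSpace ℝ (Fin d) → ℝ) (Nf : ℝ),
      InCpm p (2 * (m + 1)) Nf f → ∀ (n k : ℕ), k + 1 ≤ n → ∀ s : ℕ → ℝ,
        (∀ i, k + 1 ≤ i → i ≤ n → s i ∈ Set.Icc (0:ℝ) 1) →
        InCpm p (2 * (m + 1)) (C' * Nf) (opCompFrom P s k (n - k) f)) :
    ∀ x : EuclideanSpace ℝ (Fin d), ∃ K > 0,
      ∀ (f : EuclideanSpace ℝ (Fin d) → ℝ) (Nf : ℝ), InCpm p (2 * (m + 1)) Nf f →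
      ∀ (n : ℕ), 0 < n → ∀ (t : ℕ → ℝ), t 0 = 0 → t n = 1 → (∀ i < n, t i < t (i + 1)) →
        |opCompFrom P (fun i => t i - t (i - 1)) 0 n f x -
            opCompFrom Q (fun i => t i - t (i - 1)) 0 n f x| ≤
          K * Nf * ∑ k ∈ Finset.Icc 1 n, (t k - t (k - 1)) * δ (t k - t (k - 1)) := by
  intro x
  obtain ⟨q, K', hK', hRq⟩ := hR p hp
  obtain ⟨C', hC', hMPp⟩ := hMPprod
  obtain ⟨M, hM, hLyap⟩ := hMQ.exists_apply_one_add_norm_pow_le hQlin_add q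
  refine ⟨K' * max C' 1 * exp M * (1 + ‖x‖ ^ q), by positivity, ?_⟩
  intro f Nf hf n _ t ht0 htn hinc
  set s : ℕ → ℝ := fun i => t i - t (i - 1)
  have hs : ∀ i, 1 ≤ i → i ≤ n → s i ∈ Set.Icc (0 : ℝ) 1 := fun i =>
    sub_pred_mem_Icc_of_partition ht0 htn hinc
  have hs' : ∀ k < n, s (k + 1) ∈ Set.Icc (0 : ℝ) 1 := fun k hk => hs (k + 1) (by omega) hk
  have htail : ∀ k < n,
      InCpm p (2 * (m + 1)) (max C' 1 * Nf) (opCompFrom P s (k + 1) (n - (k + 1)) f) := by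
    intro k hk
    rcases (Nat.succ_le_of_lt hk).lt_or_eq with hlt | rfl
    · exact (hMPp f Nf hf n (k + 1) hlt s fun i hi hin => hs i (by omega) hin).mono
        (by gcongr; exacts [hf.nonneg, le_max_left _ _])
    · simpa [opCompFrom] using hf.mono (le_mul_of_one_le_left hf.nonneg (le_max_right _ _))
  have key := abs_opCompFrom_sub_opCompFrom_le (P := P) hQlin_add hQlin_smul
    (fun k hk => hMQ.monotone hQlin_add (hs' k hk)) (fun k hk => hLyap _ _ (hs' k hk)) hM
    (fun k hk => (hs' k hk).1) (ε := fun k => K' * s (k + 1) * δ (s (k + 1)) * (max C' 1 * Nf))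
    (fun k hk => mul_nonneg (mul_nonneg (mul_nonneg hK'.le (hs' k hk).1) (hδ0 _ (hs' k hk)))
      (mul_nonneg (by positivity) hf.nonneg))
    (fun k hk => hRq (k + 1) (s (k + 1)) (hs' k hk) _ _ (htail k hk)) x (by positivity)
  have hsum : ∑ i ∈ range n, s (i + 1) = 1 := by
    simp only [s, Nat.add_sub_cancel, sum_range_sub, htn, ht0, sub_zero]
  have hshift : ∑ k ∈ range n, s (k + 1) * δ (s (k + 1)) =
      ∑ k ∈ Finset.Icc 1 n, (t k - t (k - 1)) * δ (t k - t (k - 1)) := by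
    rw [range_eq_Ico, sum_Ico_add' (fun k => s k * δ (s k)) 0 n 1]
    rfl
  refine key.trans (le_of_eq ?_)
  rw [hsum, ← hshift, mul_one, mul_sum, mul_sum, sum_mul]
  exact sum_congr rfl fun k _ => by ring

/-- Theorem `Th_Approx_Operators`: under assumptions (M) for both families, (R(m,δ_m)) and
(M_P), for `f ∈ C_p^{2(m+1)}` with norm bound `Nf`,
`|∏ P̄^i f (x) - ∏ Q^i f (x)| ≤ K(x) Nf Σ_k (t_k - t_{k-1}) δ_m(t_k - t_{k-1})`,
uniformly over partitions `0 = t_0 < t_1 < ⋯ < t_n = 1`. -/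
theorem stmt_1 (d : ℕ) (m p : ℕ) (hm : 2 ≤ m) (hp : 2 ≤ p)
    (P Q : ℕ → ℝ → ((EuclideanSpace ℝ (Fin d)) → ℝ) → ((EuclideanSpace ℝ (Fin d)) → ℝ))
    (hPlin_add : ∀ i t (f g : EuclideanSpace ℝ (Fin d) → ℝ), P i t (f + g) = P i t f + P i t g)
    (hPlin_smul : ∀ i t (c : ℝ) (f : EuclideanSpace ℝ (Fin d) → ℝ), P i t (c • f) = c • P i t f)
    (hQlin_add : ∀ i t (f g : EuclideanSpace ℝ (Fin d) → ℝ), Q i t (f + g) = Q i t f + Q i t g)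
    (hQlin_smul : ∀ i t (c : ℝ) (f : EuclideanSpace ℝ (Fin d) → ℝ), Q i t (c • f) = c • Q i t f)
    (hMP : AssumptionM P) (hMQ : AssumptionM Q)
    -- the function δ_m : increasing on [0,1], nonnegative, with δ_m(t)/t^{m-1} → 0 as t → 0⁺
    (δ : ℝ → ℝ) (hδmono : MonotoneOn δ (Set.Icc (0:ℝ) 1))
    (hδ0 : ∀ t ∈ Set.Icc (0:ℝ) 1, 0 ≤ δ t)
    (hδlim : Filter.Tendsto (fun t => δ t / t ^ (m - 1)) (nhdsWithin 0 (Set.Ioi 0)) (nhds 0))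
    -- assumption (R(m,δ_m))
    (hR : ∀ p' : ℕ, 2 ≤ p' → ∃ q : ℕ, ∃ K' > 0, ∀ i : ℕ, ∀ t ∈ Set.Icc (0:ℝ) 1,
      ∀ (f : EuclideanSpace ℝ (Fin d) → ℝ) (Nf : ℝ), InCpm p' (2 * (m + 1)) Nf f →
        ∀ x, |P i t f x - Q i t f x| ≤ K' * t * δ t * Nf * (1 + ‖x‖ ^ q))
    -- assumption (M_P)
    (hMPprod : ∃ C' > 0, ∀ (f : EuclideanSpace ℝ (Fin d) → ℝ) (Nf : ℝ),
      InCpm p (2 * (m + 1)) Nf f → ∀ (n k : ℕ), k + 1 ≤ n → ∀ s : ℕ → ℝ,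
        (∀ i, k + 1 ≤ i → i ≤ n → s i ∈ Set.Icc (0:ℝ) 1) →
        InCpm p (2 * (m + 1)) (C' * Nf) (opCompFrom P s k (n - k) f)) :
    ∀ x : EuclideanSpace ℝ (Fin d), ∃ K > 0,
      ∀ (f : EuclideanSpace ℝ (Fin d) → ℝ) (Nf : ℝ), InCpm p (2 * (m + 1)) Nf f →
      ∀ (n : ℕ), 0 < n → ∀ (t : ℕ → ℝ), t 0 = 0 → t n = 1 → (∀ i < n, t i < t (i + 1)) →
        |opCompFrom P (fun i => t i - t (i - 1)) 0 n f x -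
            opCompFrom Q (fun i => t i - t (i - 1)) 0 n f x| ≤
          K * Nf * ∑ k ∈ Finset.Icc 1 n, (t k - t (k - 1)) * δ (t k - t (k - 1)) :=
  stmt_1_general d m p hp P Q hQlin_add hQlin_smul hMQ δ hδ0 hR hMPprod
end

section
/- Let n ≥ 2 be an integer and let ν be a positive Borel measure on ℝ with ∫ |y|^n ν(dy) < ∞. If (ν̄_k)_{k≥1} is a sequence of finite positive measures on ℝ, each with ∫ |y|^n ν̄_k(dy) < ∞, converging weakly to a finite positive measure ν̄, then J(ν̄) ≤ liminf_{k→∞} J(ν̄_k), where J(μ) := ∫_ℝ |y|^n |ν − μ|(dy). That is, the functional J is lower semicontinuous with respect to weak convergence of measures. -/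
/-!
Truncating the weight `|y|^n` at height `m` and letting `m → ∞` (monotone convergence) reduces
the claim to bounded continuous weights `h ≥ 0`. With `α = ν - ν ⊓ μ` and `β = μ - ν ⊓ μ`, which
are mutually singular, `∫ h d|ν - μ|` is the supremum of `∫ f dν - ∫ f dμ` over continuous `f`
with `|f| ≤ h`: each such difference equals `∫ f dα - ∫ f dβ ≤ ∫ |f| d(α + β)`, and the supremum is
approached by `f = h ψ`, where `ψ` is a Urysohn function approximating the sign of `α - β` in
`L¹` of the finite measure `h (α + β)`. Each of these functionals of `μ` is continuous under weak
convergence, so their supremum is lower semicontinuous.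
-/

open MeasureTheory Filter Set
open scoped ENNReal

/-- The total variation measure `|μ - ν| = (μ - μ⊓ν) + (ν - μ⊓ν)` of the difference of two
positive measures. -/
noncomputable def tvDist (μ ν : Measure ℝ) : Measure ℝ := (μ - μ ⊓ ν) + (ν - μ ⊓ ν)

/-- The functional `J(μ) = ∫ |y|^n |ν - μ|(dy)`. -/
noncomputable def Jfun (n : ℕ) (ν μ : Measure ℝ) : ℝ≥0∞ :=
  ∫⁻ y, ENNReal.ofReal (|y| ^ n) ∂(tvDist ν μ)

open scoped Topology

section General

variable {X : Type*} [MeasurableSpace X]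

theorem ofReal_integral_sub_integral_le_lintegral_add (α β : Measure X) (f : X → ℝ) :
    ENNReal.ofReal (∫ x, f x ∂α - ∫ x, f x ∂β) ≤ ∫⁻ x, ‖f x‖ₑ ∂(α + β) := by
  rw [lintegral_add_measure]
  calc ENNReal.ofReal (∫ x, f x ∂α - ∫ x, f x ∂β)
      ≤ ‖∫ x, f x ∂α - ∫ x, f x ∂β‖ₑ := by
        rw [Real.enorm_eq_ofReal_abs]; exact ENNReal.ofReal_le_ofReal (le_abs_self _)
    _ ≤ ‖∫ x, f x ∂α‖ₑ + ‖∫ x, f x ∂β‖ₑ := enorm_sub_le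
    _ ≤ _ := add_le_add (enorm_integral_le_lintegral_enorm f) (enorm_integral_le_lintegral_enorm f)

theorem ofReal_integral_sub_integral_le_add_lintegral_enorm_sub {α β : Measure X} {f g : X → ℝ}
    (hfα : Integrable f α) (hfβ : Integrable f β) (hgα : Integrable g α) (hgβ : Integrable g β) :
    ENNReal.ofReal (∫ x, f x ∂α - ∫ x, f x ∂β)
      ≤ ENNReal.ofReal (∫ x, g x ∂α - ∫ x, g x ∂β) + ∫⁻ x, ‖f x - g x‖ₑ ∂(α + β) := by
  have hsub : ∫ x, f x ∂α - ∫ x, f x ∂β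
      = (∫ x, g x ∂α - ∫ x, g x ∂β) + (∫ x, f x - g x ∂α - ∫ x, f x - g x ∂β) := by
    rw [integral_sub hfα hgα, integral_sub hfβ hgβ]
    ring
  rw [hsub]
  exact ENNReal.ofReal_add_le.trans
    (add_le_add le_rfl (ofReal_integral_sub_integral_le_lintegral_add α β _))

theorem integral_sub_integral_eq_of_le {ν μ σ : Measure X} [IsFiniteMeasure σ]
    (hσν : σ ≤ ν) (hσμ : σ ≤ μ) {f : X → ℝ} (hν : Integrable f ν) (hμ : Integrable f μ) :
    ∫ x, f x ∂ν - ∫ x, f x ∂μ = ∫ x, f x ∂(ν - σ) - ∫ x, f x ∂(μ - σ) := by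
  have hsplit : ∀ ρ : Measure X, σ ≤ ρ → Integrable f ρ →
      ∫ x, f x ∂ρ = ∫ x, f x ∂(ρ - σ) + ∫ x, f x ∂σ := fun ρ hσρ hρ => by
    conv_lhs => rw [← Measure.sub_add_cancel_of_le hσρ]
    exact integral_add_measure (hρ.mono_measure Measure.sub_le) (hρ.mono_measure hσρ)
  rw [hsplit ν hσν hν, hsplit μ hσμ hμ]
  ring

theorem mutuallySingular_sub_inf_sub_inf (μ ν : Measure X) [IsFiniteMeasure (μ ⊓ ν)] :
    (μ - μ ⊓ ν) ⟂ₘ (ν - μ ⊓ ν) := by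
  refine Measure.mutuallySingular_of_disjoint fun d hdμ hdν => ?_
  have hle : ∀ ρ, μ ⊓ ν ≤ ρ → d ≤ ρ - μ ⊓ ν → μ ⊓ ν + d ≤ ρ := fun ρ hρ hd => by
    calc μ ⊓ ν + d ≤ μ ⊓ ν + (ρ - μ ⊓ ν) := add_le_add_right hd _
      _ = ρ := by rw [add_comm, Measure.sub_add_cancel_of_le hρ]
  have hd : μ ⊓ ν + d ≤ μ ⊓ ν + 0 := by
    simpa using le_inf (hle μ inf_le_left hdμ) (hle ν inf_le_right hdν)
  exact Measure.le_of_add_le_add_left hd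

theorem lintegral_ofReal_add_eq_ofReal_integral_mul_sign {α β : Measure X} {S : Set X}
    (hαS : α Sᶜ = 0) (hβS : β S = 0) {h : X → ℝ} (h0 : ∀ x, 0 ≤ h x) (hα : Integrable h α)
    (hβ : Integrable h β) :
    ∫⁻ x, ENNReal.ofReal (h x) ∂(α + β) = ENNReal.ofReal
      (∫ x, h x * (2 * S.indicator 1 x - 1) ∂α - ∫ x, h x * (2 * S.indicator 1 x - 1) ∂β) := by
  have hsignα : ∫ x, h x * (2 * S.indicator 1 x - 1) ∂α = ∫ x, h x ∂α := by
    refine integral_congr_ae ?_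
    filter_upwards [measure_eq_zero_iff_ae_notMem.1 hαS] with x hx
    norm_num [not_not.1 hx]
  have hsignβ : ∫ x, h x * (2 * S.indicator 1 x - 1) ∂β = -∫ x, h x ∂β := by
    rw [← integral_neg]
    refine integral_congr_ae ?_
    filter_upwards [measure_eq_zero_iff_ae_notMem.1 hβS] with x hx
    simp [hx]
  rw [lintegral_add_measure, hsignα, hsignβ, sub_neg_eq_add,
    ENNReal.ofReal_add (integral_nonneg h0) (integral_nonneg h0),
    ofReal_integral_eq_lintegral_ofReal hα (ae_of_all _ h0),
    ofReal_integral_eq_lintegral_ofReal hβ (ae_of_all _ h0)]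

theorem lintegral_ofReal_eq_iSup_lintegral_ofReal_min (ρ : Measure X) {g : X → ℝ}
    (hg : Measurable g) :
    ∫⁻ x, ENNReal.ofReal (g x) ∂ρ = ⨆ m : ℕ, ∫⁻ x, ENNReal.ofReal (min (g x) m) ∂ρ := by
  rw [← lintegral_iSup (fun m => by fun_prop) fun a b hab x => by dsimp only; gcongr]
  congr 1
  funext x
  simp only [ENNReal.ofReal_min, ENNReal.ofReal_natCast, ← inf_iSup_eq, ENNReal.iSup_natCast,
    inf_top_eq]

end General

section Approximation

variable {X : Type*} [TopologicalSpace X] [MeasurableSpace X]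

theorem exists_continuous_lintegral_enorm_indicator_sub_le [NormalSpace X]
    [OpensMeasurableSpace X] (γ : Measure X) [γ.WeaklyRegular] [IsFiniteMeasure γ]
    {S : Set X} (hS : MeasurableSet S) {ε : ℝ≥0∞} (hε : ε ≠ 0) :
    ∃ φ : X → ℝ, Continuous φ ∧ (∀ x, φ x ∈ Icc 0 1) ∧
      ∫⁻ x, ‖S.indicator 1 x - φ x‖ₑ ∂γ ≤ ε := by
  have hε2 : ε / 2 ≠ 0 := (ENNReal.half_pos hε).ne'
  obtain ⟨K, hKS, hK, hγK⟩ := hS.exists_isClosed_sdiff_lt (measure_ne_top γ S) hε2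
  obtain ⟨U, hSU, hU, -, hγU⟩ := hS.exists_isOpen_sdiff_lt (measure_ne_top γ S) hε2
  obtain ⟨φ, hφU, hφK, hφ⟩ := exists_continuous_zero_one_of_isClosed hU.isClosed_compl hK
    (disjoint_left.2 fun x hxU hxK => hxU (hSU (hKS hxK)))
  refine ⟨φ, φ.continuous, hφ, ?_⟩
  have hpt : ∀ x, ‖S.indicator 1 x - φ x‖ₑ ≤ (U \ K).indicator 1 x := by
    intro x
    by_cases hxK : x ∈ K
    · simp [hKS hxK, hφK hxK]
    by_cases hxU : x ∈ U
    · rw [indicator_of_mem (show x ∈ U \ K from ⟨hxU, hxK⟩), Pi.one_apply,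
        Real.enorm_eq_ofReal_abs, ENNReal.ofReal_le_one, abs_sub_le_iff]
      obtain ⟨h0, h1⟩ := hφ x
      by_cases hxS : x ∈ S <;> simp [hxS] <;> constructor <;> linarith
    · have hxS : x ∉ S := fun h => hxU (hSU h)
      simp [hxS, hφU hxU]
  calc ∫⁻ x, ‖S.indicator 1 x - φ x‖ₑ ∂γ
      ≤ ∫⁻ x, (U \ K).indicator 1 x ∂γ := lintegral_mono hpt
    _ = γ (U \ K) := lintegral_indicator_one (hU.measurableSet.diff hK.measurableSet)
    _ ≤ γ (U \ S) + γ (S \ K) :=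
        (measure_mono fun x (hx : x ∈ U \ K) => by by_cases hxS : x ∈ S <;> simp_all).trans
          (measure_union_le _ _)
    _ ≤ ε := by rw [← ENNReal.add_halves ε]; exact add_le_add hγU.le hγK.le

end Approximation

section Duality

variable {X : Type*} [TopologicalSpace X] [TopologicalSpace.PseudoMetrizableSpace X]
  [MeasurableSpace X] [BorelSpace X]

theorem exists_continuous_lintegral_le_integral_sub_integral {α β : Measure X} (hαβ : α ⟂ₘ β)
    {h : X → ℝ} (h0 : ∀ x, 0 ≤ h x) (hα : Integrable h α) (hβ : Integrable h β)
    {ε : ℝ≥0∞} (hε : ε ≠ 0) :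
    ∃ ψ : X → ℝ, Continuous ψ ∧ (∀ x, |ψ x| ≤ 1) ∧
      ∫⁻ x, ENNReal.ofReal (h x) ∂(α + β)
        ≤ ENNReal.ofReal (∫ x, h x * ψ x ∂α - ∫ x, h x * ψ x ∂β) + ε := by
  set S := hαβ.nullSetᶜ
  have hS : MeasurableSet S := hαβ.measurableSet_nullSet.compl
  have hαβh : Integrable h (α + β) := hα.add_measure hβ
  set γ := (α + β).withDensity fun x => ENNReal.ofReal (h x)
  have : IsFiniteMeasure γ := isFiniteMeasure_withDensity hαβh.lintegral_lt_top.ne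
  obtain ⟨φ, hφc, hφ, hγφ⟩ := exists_continuous_lintegral_enorm_indicator_sub_le γ hS
    (ENNReal.half_pos hε).ne'
  set ψ : X → ℝ := fun x => 2 * φ x - 1
  have hψc : Continuous ψ := by fun_prop
  have hψ : ∀ x, |ψ x| ≤ 1 := fun x =>
    abs_le.2 ⟨by linarith [(hφ x).1], by linarith [(hφ x).2]⟩
  refine ⟨ψ, hψc, hψ, ?_⟩
  set t : X → ℝ := fun x => 2 * S.indicator 1 x - 1
  have htm : Measurable t := by fun_prop
  have ht : ∀ x, |t x| ≤ 1 := fun x => by by_cases hx : x ∈ S <;> norm_num [t, hx]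
  have hint : ∀ {ρ : Measure X} {g : X → ℝ}, Integrable h ρ → AEStronglyMeasurable g ρ →
      (∀ x, |g x| ≤ 1) → Integrable (fun x => h x * g x) ρ := fun hρ hg hg1 =>
    hρ.mul_bdd hg (ae_of_all _ hg1)
  calc ∫⁻ x, ENNReal.ofReal (h x) ∂(α + β)
      = ENNReal.ofReal (∫ x, h x * t x ∂α - ∫ x, h x * t x ∂β) :=
        lintegral_ofReal_add_eq_ofReal_integral_mul_sign
          (by rw [compl_compl]; exact hαβ.measure_nullSet) hαβ.measure_compl_nullSet h0 hα hβ
    _ ≤ ENNReal.ofReal (∫ x, h x * ψ x ∂α - ∫ x, h x * ψ x ∂β)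
          + ∫⁻ x, ‖h x * t x - h x * ψ x‖ₑ ∂(α + β) :=
        ofReal_integral_sub_integral_le_add_lintegral_enorm_sub
          (hint hα htm.aestronglyMeasurable ht) (hint hβ htm.aestronglyMeasurable ht)
          (hint hα hψc.aestronglyMeasurable hψ) (hint hβ hψc.aestronglyMeasurable hψ)
    _ = ENNReal.ofReal (∫ x, h x * ψ x ∂α - ∫ x, h x * ψ x ∂β)
          + 2 * ∫⁻ x, ‖S.indicator 1 x - φ x‖ₑ ∂γ := by
        rw [← lintegral_const_mul' _ _ ENNReal.ofNat_ne_top,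
          lintegral_withDensity_eq_lintegral_mul₀ hαβh.aemeasurable.ennreal_ofReal (by fun_prop)]
        congr 2
        funext x
        have hdiff : h x * t x - h x * ψ x = h x * (2 * (S.indicator 1 x - φ x)) := by ring
        rw [hdiff, enorm_mul, enorm_mul, Real.enorm_of_nonneg (h0 x),
          Real.enorm_of_nonneg zero_le_two, ENNReal.ofReal_ofNat]
        rfl
    _ ≤ _ := by
        gcongr
        calc 2 * ∫⁻ x, ‖S.indicator 1 x - φ x‖ₑ ∂γ ≤ 2 * (ε / 2) := by gcongr
          _ = ε := ENNReal.mul_div_cancel two_ne_zero ENNReal.ofNat_ne_top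

end Duality

theorem ofReal_integral_sub_integral_le_lintegral_tvDist {ν μ : Measure ℝ} [IsFiniteMeasure μ]
    {f : ℝ → ℝ} (hν : Integrable f ν) (hμ : Integrable f μ) :
    ENNReal.ofReal (∫ y, f y ∂ν - ∫ y, f y ∂μ) ≤ ∫⁻ y, ‖f y‖ₑ ∂tvDist ν μ := by
  have : IsFiniteMeasure (ν ⊓ μ) := isFiniteMeasure_of_le μ inf_le_right
  rw [integral_sub_integral_eq_of_le inf_le_left inf_le_right hν hμ]
  exact ofReal_integral_sub_integral_le_lintegral_add _ _ f

theorem exists_continuous_lintegral_tvDist_le {ν μ : Measure ℝ} [IsFiniteMeasure μ]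
    {h : ℝ → ℝ} (h0 : ∀ y, 0 ≤ h y) (hν : Integrable h ν) (hμ : Integrable h μ)
    {ε : ℝ≥0∞} (hε : ε ≠ 0) :
    ∃ ψ : ℝ → ℝ, Continuous ψ ∧ (∀ y, |ψ y| ≤ 1) ∧
      ∫⁻ y, ENNReal.ofReal (h y) ∂tvDist ν μ
        ≤ ENNReal.ofReal (∫ y, h y * ψ y ∂ν - ∫ y, h y * ψ y ∂μ) + ε := by
  have : IsFiniteMeasure (ν ⊓ μ) := isFiniteMeasure_of_le μ inf_le_right
  obtain ⟨ψ, hψc, hψ, hJ⟩ := exists_continuous_lintegral_le_integral_sub_integral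
    (mutuallySingular_sub_inf_sub_inf ν μ) h0 (hν.mono_measure Measure.sub_le)
    (hμ.mono_measure Measure.sub_le) hε
  refine ⟨ψ, hψc, hψ, ?_⟩
  rwa [integral_sub_integral_eq_of_le inf_le_left inf_le_right
    (hν.mul_bdd hψc.aestronglyMeasurable (ae_of_all _ hψ))
    (hμ.mul_bdd hψc.aestronglyMeasurable (ae_of_all _ hψ))]

theorem lintegral_tvDist_le_liminf {ν : Measure ℝ} {μs : ℕ → Measure ℝ}
    [∀ k, IsFiniteMeasure (μs k)] {μ : Measure ℝ} [IsFiniteMeasure μ]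
    (hweak : ∀ f : ℝ → ℝ, Continuous f → (∃ C : ℝ, ∀ x, |f x| ≤ C) →
      Tendsto (fun k => ∫ y, f y ∂(μs k)) atTop (𝓝 (∫ y, f y ∂μ)))
    {h : ℝ → ℝ} (hc : Continuous h) (h0 : ∀ y, 0 ≤ h y) {C : ℝ} (hC : ∀ y, h y ≤ C)
    (hν : Integrable h ν) :
    ∫⁻ y, ENNReal.ofReal (h y) ∂tvDist ν μ
      ≤ liminf (fun k => ∫⁻ y, ENNReal.ofReal (h y) ∂tvDist ν (μs k)) atTop := by
  have hfin : ∀ (ρ : Measure ℝ) [IsFiniteMeasure ρ], Integrable h ρ := fun ρ _ =>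
    .of_bound hc.aestronglyMeasurable C (ae_of_all _ fun y => by
      rw [Real.norm_of_nonneg (h0 y)]; exact hC y)
  refine ENNReal.le_of_forall_pos_le_add fun ε hε _ => ?_
  obtain ⟨ψ, hψc, hψ, hJ⟩ :=
    exists_continuous_lintegral_tvDist_le h0 hν (hfin μ) (ENNReal.coe_ne_zero.2 hε.ne')
  have hint : ∀ {ρ : Measure ℝ}, Integrable h ρ → Integrable (fun y => h y * ψ y) ρ :=
    fun hρ => hρ.mul_bdd hψc.aestronglyMeasurable (ae_of_all _ hψ)
  have hle : ∀ y, |h y * ψ y| ≤ h y := fun y => by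
    rw [abs_mul, abs_of_nonneg (h0 y)]; exact mul_le_of_le_one_right (h0 y) (hψ y)
  have hlim : Tendsto (fun k => ENNReal.ofReal (∫ y, h y * ψ y ∂ν - ∫ y, h y * ψ y ∂(μs k)))
      atTop (𝓝 (ENNReal.ofReal (∫ y, h y * ψ y ∂ν - ∫ y, h y * ψ y ∂μ))) :=
    (ENNReal.continuous_ofReal.tendsto _).comp (tendsto_const_nhds.sub
      (hweak _ (hc.mul hψc) ⟨C, fun y => (hle y).trans (hC y)⟩))
  calc ∫⁻ y, ENNReal.ofReal (h y) ∂tvDist ν μ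
      ≤ ENNReal.ofReal (∫ y, h y * ψ y ∂ν - ∫ y, h y * ψ y ∂μ) + ε := hJ
    _ ≤ liminf (fun k => ∫⁻ y, ENNReal.ofReal (h y) ∂tvDist ν (μs k)) atTop + ε := by
        gcongr
        rw [← hlim.liminf_eq]
        refine liminf_le_liminf (.of_forall fun k => ?_)
        refine (ofReal_integral_sub_integral_le_lintegral_tvDist (hint hν) (hint (hfin _))).trans
          (lintegral_mono fun y => ?_)
        rw [Real.enorm_eq_ofReal_abs]
        exact ENNReal.ofReal_le_ofReal (hle y)

theorem stmt_5_general (n : ℕ) (ν : Measure ℝ)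
    (hν : (∫⁻ y, ENNReal.ofReal (|y| ^ n) ∂ν) < ⊤)
    (νbs : ℕ → Measure ℝ) (hfin : ∀ k, IsFiniteMeasure (νbs k))
    (νb : Measure ℝ) (hνb : IsFiniteMeasure νb)
    (hweak : ∀ f : ℝ → ℝ, Continuous f → (∃ C : ℝ, ∀ x, |f x| ≤ C) →
      Filter.Tendsto (fun k => ∫ y, f y ∂(νbs k)) Filter.atTop (nhds (∫ y, f y ∂νb))) :
    Jfun n ν νb ≤ Filter.liminf (fun k => Jfun n ν (νbs k)) Filter.atTop := by
  have hmoment : Integrable (fun y : ℝ => |y| ^ n) ν :=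
    ⟨by fun_prop, (hasFiniteIntegral_iff_ofReal (ae_of_all _ fun y => by positivity)).2 hν⟩
  rw [Jfun, lintegral_ofReal_eq_iSup_lintegral_ofReal_min _ (by fun_prop)]
  refine iSup_le fun m => ?_
  have htrunc0 : ∀ y : ℝ, 0 ≤ min (|y| ^ n) (m : ℝ) := fun y =>
    le_min (by positivity) m.cast_nonneg
  calc ∫⁻ y, ENNReal.ofReal (min (|y| ^ n) m) ∂tvDist ν νb
      ≤ liminf (fun k => ∫⁻ y, ENNReal.ofReal (min (|y| ^ n) m) ∂tvDist ν (νbs k)) atTop :=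
        lintegral_tvDist_le_liminf hweak (by fun_prop) htrunc0 (fun y => min_le_right _ _)
          (hmoment.mono (by fun_prop) (ae_of_all _ fun y => by
            rw [Real.norm_of_nonneg (htrunc0 y), Real.norm_of_nonneg (by positivity)]
            exact min_le_left _ _))
    _ ≤ liminf (fun k => Jfun n ν (νbs k)) atTop :=
        liminf_le_liminf (.of_forall fun k =>
          lintegral_mono fun y => ENNReal.ofReal_le_ofReal (min_le_left _ _))

/-- Lower semicontinuity of `J` with respect to weak convergence of measures: if the finite
measures `ν̄_k` (with finite `n`-th absolute moments) converge weakly to the finite measure `ν̄`,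
then `J(ν̄) ≤ liminf_k J(ν̄_k)`. -/
theorem stmt_5 (n : ℕ) (hn : 2 ≤ n) (ν : Measure ℝ)
    (hν : (∫⁻ y, ENNReal.ofReal (|y| ^ n) ∂ν) < ⊤)
    (νbs : ℕ → Measure ℝ) (hfin : ∀ k, IsFiniteMeasure (νbs k))
    (hmom : ∀ k, (∫⁻ y, ENNReal.ofReal (|y| ^ n) ∂(νbs k)) < ⊤)
    (νb : Measure ℝ) (hνb : IsFiniteMeasure νb)
    (hweak : ∀ f : ℝ → ℝ, Continuous f → (∃ C : ℝ, ∀ x, |f x| ≤ C) →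
      Filter.Tendsto (fun k => ∫ y, f y ∂(νbs k)) Filter.atTop (nhds (∫ y, f y ∂νb))) :
    Jfun n ν νb ≤ Filter.liminf (fun k => Jfun n ν (νbs k)) Filter.atTop :=
  stmt_5_general n ν hν νbs hfin νb hνb hweak
end

section
/- Let ν be a Lévy measure on ℝ that is absolutely continuous with respect to Lebesgue measure and satisfies ∫_ℝ y² ν(dy) < ∞ and ν(ℝ) = ∞, let Λ > 0, and let ε > 0 be such that ν({y : y² > ε}) = Λ. Then the truncated measure ν̄_ε(dy) = 1_{{y² > ε}} ν(dy) is a solution of problem Ω_{2,Λ} (minimization of J over finite measures of total mass Λ, with no moment constraints), and the optimal value is E_2(Λ) = ∫_{{y² ≤ ε}} y² ν(dy). -/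
open MeasureTheory Filter Set
open scoped ENNReal

/-- The functional `J(ν̄) = ∫ y² |ν - ν̄|(dy)`. -/
noncomputable def Jfun2 (ν νb : Measure ℝ) : ℝ≥0∞ :=
  ∫⁻ y, ENNReal.ofReal (y ^ 2) ∂(tvDist ν νb)

/-!
Truncation discards exactly `ν` on `{y² ≤ ε}`, so `J(ν̄_ε) = ∫_{y² ≤ ε} y² dν`. For a competitor
`ν̄` of mass `Λ`, the common part `m = ν ⊓ ν̄` has mass at most `Λ = ν{y² > ε}`, and
`J(ν̄) ≥ ∫ y² d(ν - m)`. Whatever mass `m` takes from `{y² ≤ ε}`, where `y² ≤ ε`, is matched by at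
least as much mass of `ν - m` left on `{y² > ε}`, where `y² ≥ ε` (a bathtub argument).
-/

section Bathtub

variable {α : Type*} [MeasurableSpace α] {ν m : Measure α} {A : Set α}

lemma measure_compl_le_sub_apply (hA : MeasurableSet A) (hνA : ν A ≠ ∞) (hmν : m ≤ ν)
    (hmass : m univ ≤ ν A) : m Aᶜ ≤ (ν - m) A := by
  have : IsFiniteMeasure m := ⟨hmass.trans_lt hνA.lt_top⟩
  rw [measure_compl hA (measure_ne_top m A), Measure.sub_apply hA hmν]
  exact tsub_le_tsub_right hmass _

lemma setLIntegral_compl_le_lintegral_sub (f : α → ℝ≥0∞) (c : ℝ≥0∞) (hA : MeasurableSet A)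
    (hνA : ν A ≠ ∞) (hmν : m ≤ ν) (hmass : m univ ≤ ν A)
    (hfA : ∀ x ∈ A, c ≤ f x) (hfAc : ∀ x ∈ Aᶜ, f x ≤ c) :
    ∫⁻ x in Aᶜ, f x ∂ν ≤ ∫⁻ x, f x ∂(ν - m) := by
  have : IsFiniteMeasure m := ⟨hmass.trans_lt hνA.lt_top⟩
  have hmoved : ∫⁻ x in Aᶜ, f x ∂m ≤ ∫⁻ x in A, f x ∂(ν - m) :=
    calc ∫⁻ x in Aᶜ, f x ∂m ≤ ∫⁻ _ in Aᶜ, c ∂m := setLIntegral_mono' hA.compl hfAc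
      _ = c * m Aᶜ := setLIntegral_const _ _
      _ ≤ c * (ν - m) A := by gcongr c * ?_; exact measure_compl_le_sub_apply hA hνA hmν hmass
      _ = ∫⁻ _ in A, c ∂(ν - m) := (setLIntegral_const _ _).symm
      _ ≤ ∫⁻ x in A, f x ∂(ν - m) := setLIntegral_mono' hA hfA
  calc ∫⁻ x in Aᶜ, f x ∂ν
      = ∫⁻ x in Aᶜ, f x ∂(ν - m) + ∫⁻ x in Aᶜ, f x ∂m := by
        conv_lhs => rw [← Measure.sub_add_cancel_of_le hmν]
        rw [Measure.restrict_add, lintegral_add_measure]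
    _ ≤ ∫⁻ x in Aᶜ, f x ∂(ν - m) + ∫⁻ x in A, f x ∂(ν - m) := by gcongr
    _ = ∫⁻ x, f x ∂(ν - m) := by rw [add_comm, lintegral_add_compl _ hA]

end Bathtub

lemma tvDist_restrict_self {ν : Measure ℝ} {A : Set ℝ} (hA : MeasurableSet A) (hνA : ν A ≠ ∞) :
    tvDist ν (ν.restrict A) = ν.restrict Aᶜ := by
  have hle : ν.restrict A ≤ ν := Measure.restrict_le_self
  have : IsFiniteMeasure (ν.restrict A) := ⟨by rwa [Measure.restrict_apply_univ, lt_top_iff_ne_top]⟩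
  rw [tvDist, inf_eq_right.mpr hle, Measure.sub_self, add_zero]
  ext s hs
  have hsA : ν (s ∩ A) ≠ ∞ := ne_top_of_le_ne_top hνA (measure_mono inter_subset_right)
  rw [Measure.sub_apply hs hle, Measure.restrict_apply hs, Measure.restrict_apply hs,
    ← measure_inter_add_sdiff s hA, ENNReal.add_sub_cancel_left hsA, sdiff_eq]

lemma Jfun2_restrict_self {ν : Measure ℝ} {A : Set ℝ} (hA : MeasurableSet A) (hνA : ν A ≠ ∞) :
    Jfun2 ν (ν.restrict A) = ∫⁻ y in Aᶜ, ENNReal.ofReal (y ^ 2) ∂ν := by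
  rw [Jfun2, tvDist_restrict_self hA hνA]

lemma lintegral_sub_inf_le_Jfun2 (ν νb : Measure ℝ) :
    ∫⁻ y, ENNReal.ofReal (y ^ 2) ∂(ν - ν ⊓ νb) ≤ Jfun2 ν νb := by
  rw [Jfun2, tvDist, lintegral_add_measure]
  exact le_self_add

theorem stmt_8_general (ν : Measure ℝ)
    (Λ ε : ℝ)
    (hmass : ν {y : ℝ | ε < y ^ 2} = ENNReal.ofReal Λ) :
    (∀ νb : Measure ℝ, IsFiniteMeasure νb → νb Set.univ = ENNReal.ofReal Λ →
        Jfun2 ν (ν.restrict {y : ℝ | ε < y ^ 2}) ≤ Jfun2 ν νb) ∧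
    Jfun2 ν (ν.restrict {y : ℝ | ε < y ^ 2}) =
      ∫⁻ y in {y : ℝ | y ^ 2 ≤ ε}, ENNReal.ofReal (y ^ 2) ∂ν := by
  set A : Set ℝ := {y : ℝ | ε < y ^ 2}
  have hA : MeasurableSet A := measurableSet_lt measurable_const (measurable_id.pow_const 2)
  have hνA : ν A ≠ ∞ := hmass ▸ ENNReal.ofReal_ne_top
  have hAc : Aᶜ = {y : ℝ | y ^ 2 ≤ ε} := by ext y; simp [A]
  have hJ : Jfun2 ν (ν.restrict A) = ∫⁻ y in {y : ℝ | y ^ 2 ≤ ε}, ENNReal.ofReal (y ^ 2) ∂ν := by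
    rw [Jfun2_restrict_self hA hνA, hAc]
  refine ⟨fun νb _ hνb => ?_, hJ⟩
  have hinf_mass : (ν ⊓ νb) univ ≤ ν A := hmass ▸ hνb ▸ (inf_le_right : ν ⊓ νb ≤ νb) univ
  calc Jfun2 ν (ν.restrict A) = ∫⁻ y in Aᶜ, ENNReal.ofReal (y ^ 2) ∂ν := Jfun2_restrict_self hA hνA
    _ ≤ ∫⁻ y, ENNReal.ofReal (y ^ 2) ∂(ν - ν ⊓ νb) :=
        setLIntegral_compl_le_lintegral_sub _ (ENNReal.ofReal ε) hA hνA inf_le_left hinf_mass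
          (fun _ hy => ENNReal.ofReal_le_ofReal hy.le)
          (fun _ hy => ENNReal.ofReal_le_ofReal (not_lt.mp hy))
    _ ≤ Jfun2 ν νb := lintegral_sub_inf_le_Jfun2 ν νb

/-- The case `n = 2`: the truncated measure `ν̄_ε(dy) = 1_{y²>ε} ν(dy)` solves problem
`Ω_{2,Λ}` (minimization of `J` over finite measures of total mass `Λ`), with optimal value
`E_2(Λ) = ∫_{y²≤ε} y² ν(dy)`. -/
theorem stmt_8 (ν : Measure ℝ)
    (hν0 : ν {0} = 0) (hac : ν ≪ volume) (hνinf : ν Set.univ = ⊤)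
    (hν2 : (∫⁻ y, ENNReal.ofReal (y ^ 2) ∂ν) < ⊤)
    (Λ ε : ℝ) (hΛ : 0 < Λ) (hε : 0 < ε)
    (hmass : ν {y : ℝ | ε < y ^ 2} = ENNReal.ofReal Λ) :
    (∀ νb : Measure ℝ, IsFiniteMeasure νb → νb Set.univ = ENNReal.ofReal Λ →
        Jfun2 ν (ν.restrict {y : ℝ | ε < y ^ 2}) ≤ Jfun2 ν νb) ∧
    Jfun2 ν (ν.restrict {y : ℝ | ε < y ^ 2}) =
      ∫⁻ y in {y : ℝ | y ^ 2 ≤ ε}, ENNReal.ofReal (y ^ 2) ∂ν :=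
  stmt_8_general ν Λ ε hmass
end

section
/- Let ν be a Lévy measure on ℝ that is absolutely continuous with respect to Lebesgue measure, with ν(ℝ) = ∞, ∫ y² ν(dy) < ∞ and ∫ |y|³ ν(dy) < ∞. For Λ > 0 let ε = ε(Λ) > 0 solve ∫_{{|y|>ε}} ν(dy) + (1/(4ε²)) ∫_{{|y|≤ε}} y² ν(dy) = Λ, and let α_1, α_2 ≥ 0 satisfy α_1 + α_2 = (1/(4ε²)) ∫_{{|y|≤ε}} y² ν(dy). Then the measure ν̄_ε(dy) = 1_{{|y|>ε}} ν(dy) + α_1 δ_{−2ε}(dy) + α_2 δ_{2ε}(dy) is a solution of problem Ω_{3,Λ}, and the optimal value satisfies E_3(Λ) ≤ 3 ε(Λ) ∫_{{|y|≤ε(Λ)}} y² ν(dy); in particular E_3(Λ) = o(Λ^{−1/2}) as Λ → ∞. -/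
open MeasureTheory Filter Set
open scoped ENNReal

/-- The functional `J(ν̄) = ∫ |y|³ |ν - ν̄|(dy)`. -/
noncomputable def Jfun3 (ν νb : Measure ℝ) : ℝ≥0∞ :=
  ∫⁻ y, ENNReal.ofReal (|y| ^ 3) ∂(tvDist ν νb)

/-- The constraint set of problem `Ω_{3,Λ}`: finite measures of mass `Λ` matching the second
moment of `ν`. -/
def Constraint3 (ν : Measure ℝ) (Λ : ℝ) (νb : Measure ℝ) : Prop :=
  IsFiniteMeasure νb ∧ νb Set.univ = ENNReal.ofReal Λ ∧
    MeasureTheory.Integrable (fun y => y ^ 2) νb ∧ (∫ y, y ^ 2 ∂νb) = ∫ y, y ^ 2 ∂ν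

/-- The approximating measure `ν̄_ε = 1_{|y|>ε} ν + α₁ δ_{-2ε} + α₂ δ_{2ε}`. -/
noncomputable def approx3 (ν : Measure ℝ) (ε α₁ α₂ : ℝ) : Measure ℝ :=
  ν.restrict {y : ℝ | ε < |y|} + ENNReal.ofReal α₁ • Measure.dirac (-(2 * ε))
    + ENNReal.ofReal α₂ • Measure.dirac (2 * ε)

open Topology

/-!
Weak duality, with Lagrange multipliers `4ε³` for the mass and `3ε` for the second moment.
Write `ρ = ν ⊓ μ`, `ν = σ + ρ`, `μ = τ + ρ` for an admissible `μ`. Since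
`|y|³ + 4ε³ ≥ 3εy²`, with equality at `|y| = 2ε`, and the second moments of `σ` and `τ` agree,
`J(μ) + 4ε³ Λ ≥ ∫ min(|y|³ + 3εy², 4ε³) ν(dy)`. The measure `ν̄_ε`, which keeps `ν` on `|y| > ε`
and moves the second moment of the small jumps to `±2ε`, attains this bound.
For the rate, `ε² Λ ≤ ∫ y² ν(dy)`, so `ε(Λ) √Λ` stays bounded while `∫_{|y|≤ε} y² ν(dy) → 0`.
-/

lemma lintegral_smul_dirac_neg_add_smul_dirac {φ : ℝ → ℝ≥0∞} {a : ℝ} (hφ : φ (-a) = φ a)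
    (c₁ c₂ : ℝ≥0∞) :
    ∫⁻ y, φ y ∂(c₁ • Measure.dirac (-a) + c₂ • Measure.dirac a) = (c₁ + c₂) * φ a := by
  rw [lintegral_add_measure, lintegral_smul_measure, lintegral_smul_measure, lintegral_dirac,
    lintegral_dirac, hφ, smul_eq_mul, smul_eq_mul, add_mul]

lemma inf_restrict_add_eq_restrict {ν D : Measure ℝ} {s : Set ℝ} (hs : MeasurableSet s)
    (hD : D sᶜ = 0) : ν ⊓ (ν.restrict s + D) = ν.restrict s := by
  refine le_antisymm (Measure.le_iff.mpr fun t ht => ?_)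
    (le_inf Measure.restrict_le_self (Measure.le_add_right le_rfl))
  have hDt : D (sᶜ ∩ t) = 0 := measure_mono_null inter_subset_left hD
  calc (ν ⊓ (ν.restrict s + D)) t ≤ ν (s ∩ t) + (ν.restrict s + D) (sᶜ ∩ t) := by
        rw [Measure.inf_apply ht]; exact sInf_le ⟨s, rfl⟩
    _ = ν.restrict s t := by
        rw [Measure.add_apply, hDt, Measure.restrict_apply' hs, Measure.restrict_apply' hs,
          inter_right_comm, compl_inter_self, empty_inter, measure_empty, add_zero, add_zero,
          inter_comm]

lemma tvDist_restrict_add {ν D : Measure ℝ} {s : Set ℝ} (hs : MeasurableSet s) (hD : D sᶜ = 0)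
    (hνs : ν s ≠ ∞) : tvDist ν (ν.restrict s + D) = ν.restrict sᶜ + D := by
  have : IsFiniteMeasure (ν.restrict s) := ⟨by simpa using hνs.lt_top⟩
  rw [tvDist, inf_restrict_add_eq_restrict hs hD, add_comm (ν.restrict s) D,
    Measure.add_sub_cancel]
  have hν : ν - ν.restrict s = ν.restrict sᶜ := by
    nth_rw 1 [← Measure.restrict_add_restrict_compl (μ := ν) hs, add_comm]
    exact Measure.add_sub_cancel
  rw [hν, add_comm]

lemma lintegral_min_le_add {α : Type*} [MeasurableSpace α] {σ ρ : Measure α} (f g : α → ℝ≥0∞) :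
    ∫⁻ x, min (f x) (g x) ∂(σ + ρ) ≤ ∫⁻ x, f x ∂σ + ∫⁻ x, g x ∂ρ := by
  rw [lintegral_add_measure]
  exact add_le_add (lintegral_mono fun x => min_le_left _ _)
    (lintegral_mono fun x => min_le_right _ _)

lemma measurableSet_lt_abs (ε : ℝ) : MeasurableSet {y : ℝ | ε < |y|} :=
  measurableSet_lt measurable_const continuous_abs.measurable

lemma compl_setOf_lt_abs (ε : ℝ) : {y : ℝ | ε < |y|}ᶜ = {y : ℝ | |y| ≤ ε} := by
  ext y; simp only [mem_compl_iff, mem_ofPred_eq, not_lt]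

lemma three_mul_sq_le_abs_pow_three_add {ε : ℝ} (hε : 0 ≤ ε) (y : ℝ) :
    3 * ε * y ^ 2 ≤ |y| ^ 3 + 4 * ε ^ 3 := by
  rw [← sq_abs y]
  nlinarith [mul_nonneg (add_nonneg (abs_nonneg y) hε) (sq_nonneg (|y| - 2 * ε))]

lemma ofReal_mul_lintegral_sq_le {ε : ℝ} (hε : 0 ≤ ε) (τ : Measure ℝ) :
    ENNReal.ofReal (3 * ε) * ∫⁻ y, ENNReal.ofReal (y ^ 2) ∂τ
      ≤ ∫⁻ y, ENNReal.ofReal (|y| ^ 3) ∂τ + ENNReal.ofReal (4 * ε ^ 3) * τ univ := by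
  rw [← lintegral_const_mul' _ _ ENNReal.ofReal_ne_top, ← lintegral_const,
    ← lintegral_add_right _ measurable_const]
  refine lintegral_mono fun y => ?_
  rw [← ENNReal.ofReal_mul (by positivity), ← ENNReal.ofReal_add (by positivity) (by positivity)]
  exact ENNReal.ofReal_le_ofReal (three_mul_sq_le_abs_pow_three_add hε y)

lemma lintegral_ofReal_abs_pow_three_add {ε : ℝ} (hε : 0 ≤ ε) (m : Measure ℝ) :
    ∫⁻ y, ENNReal.ofReal (|y| ^ 3 + 3 * ε * y ^ 2) ∂m
      = ∫⁻ y, ENNReal.ofReal (|y| ^ 3) ∂m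
        + ENNReal.ofReal (3 * ε) * ∫⁻ y, ENNReal.ofReal (y ^ 2) ∂m := by
  have hsplit : ∀ y : ℝ, ENNReal.ofReal (|y| ^ 3 + 3 * ε * y ^ 2)
      = ENNReal.ofReal (|y| ^ 3) + ENNReal.ofReal (3 * ε) * ENNReal.ofReal (y ^ 2) := fun y => by
    rw [ENNReal.ofReal_add (by positivity) (by positivity), ENNReal.ofReal_mul (by positivity)]
  simp_rw [hsplit]
  rw [lintegral_add_left (f := fun y : ℝ => ENNReal.ofReal (|y| ^ 3)) (by fun_prop),
    lintegral_const_mul' _ _ ENNReal.ofReal_ne_top]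

noncomputable def dualValue (ν : Measure ℝ) (ε : ℝ) : ℝ≥0∞ :=
  ∫⁻ y, min (ENNReal.ofReal (|y| ^ 3 + 3 * ε * y ^ 2)) (ENNReal.ofReal (4 * ε ^ 3)) ∂ν

theorem dualValue_le_Jfun3_add {ν μ : Measure ℝ} [IsFiniteMeasure μ] {ε : ℝ} (hε : 0 ≤ ε)
    (hν : ∫⁻ y, ENNReal.ofReal (y ^ 2) ∂ν ≠ ∞)
    (hμν : ∫⁻ y, ENNReal.ofReal (y ^ 2) ∂μ = ∫⁻ y, ENNReal.ofReal (y ^ 2) ∂ν) :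
    dualValue ν ε ≤ Jfun3 ν μ + ENNReal.ofReal (4 * ε ^ 3) * μ univ := by
  set ρ := ν ⊓ μ
  have : IsFiniteMeasure ρ := isFiniteMeasure_of_le μ inf_le_right
  have hν_eq : ν - ρ + ρ = ν := Measure.sub_add_cancel_of_le inf_le_left
  have hμ_eq : μ - ρ + ρ = μ := Measure.sub_add_cancel_of_le inf_le_right
  have hρ : ∫⁻ y, ENNReal.ofReal (y ^ 2) ∂ρ ≠ ∞ :=
    ne_top_of_le_ne_top hν (lintegral_mono' inf_le_left le_rfl)
  have hmom : ∫⁻ y, ENNReal.ofReal (y ^ 2) ∂(ν - ρ) = ∫⁻ y, ENNReal.ofReal (y ^ 2) ∂(μ - ρ) := by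
    rw [← ENNReal.add_left_inj hρ, ← lintegral_add_measure, ← lintegral_add_measure, hν_eq,
      hμ_eq, hμν]
  calc dualValue ν ε
      = ∫⁻ y, min (ENNReal.ofReal (|y| ^ 3 + 3 * ε * y ^ 2)) (ENNReal.ofReal (4 * ε ^ 3))
          ∂(ν - ρ + ρ) := by rw [hν_eq, dualValue]
    _ ≤ ∫⁻ y, ENNReal.ofReal (|y| ^ 3 + 3 * ε * y ^ 2) ∂(ν - ρ)
          + ∫⁻ _, ENNReal.ofReal (4 * ε ^ 3) ∂ρ := lintegral_min_le_add _ _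
    _ = ∫⁻ y, ENNReal.ofReal (|y| ^ 3) ∂(ν - ρ)
          + ENNReal.ofReal (3 * ε) * ∫⁻ y, ENNReal.ofReal (y ^ 2) ∂(μ - ρ)
          + ENNReal.ofReal (4 * ε ^ 3) * ρ univ := by
        rw [lintegral_ofReal_abs_pow_three_add hε, hmom, lintegral_const]
    _ ≤ ∫⁻ y, ENNReal.ofReal (|y| ^ 3) ∂(ν - ρ)
          + (∫⁻ y, ENNReal.ofReal (|y| ^ 3) ∂(μ - ρ) + ENNReal.ofReal (4 * ε ^ 3) * (μ - ρ) univ)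
          + ENNReal.ofReal (4 * ε ^ 3) * ρ univ := by
        gcongr; exact ofReal_mul_lintegral_sq_le hε _
    _ = Jfun3 ν μ + ENNReal.ofReal (4 * ε ^ 3) * μ univ := by
        rw [Jfun3, tvDist, lintegral_add_measure, ← hμ_eq, Measure.add_apply, hμ_eq]
        ring

lemma dualValue_eq {ε : ℝ} (hε : 0 ≤ ε) (ν : Measure ℝ) :
    dualValue ν ε = ∫⁻ y in {y : ℝ | |y| ≤ ε}, ENNReal.ofReal (|y| ^ 3 + 3 * ε * y ^ 2) ∂ν
      + ENNReal.ofReal (4 * ε ^ 3) * ν {y : ℝ | ε < |y|} := by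
  rw [dualValue, ← lintegral_add_compl _ (measurableSet_lt_abs ε), compl_setOf_lt_abs, add_comm,
    ← setLIntegral_const]
  congr 1
  · refine setLIntegral_congr_fun (compl_setOf_lt_abs ε ▸ (measurableSet_lt_abs ε).compl)
      fun y (hy : |y| ≤ ε) => min_eq_left (ENNReal.ofReal_le_ofReal ?_)
    have h2 : y ^ 2 ≤ ε ^ 2 := by rw [← sq_abs]; exact pow_le_pow_left₀ (abs_nonneg y) hy 2
    nlinarith [pow_le_pow_left₀ (abs_nonneg y) hy 3, mul_le_mul_of_nonneg_left h2 hε]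
  · refine setLIntegral_congr_fun (measurableSet_lt_abs ε)
      fun y (hy : ε < |y|) => min_eq_right (ENNReal.ofReal_le_ofReal ?_)
    have h2 : ε ^ 2 ≤ y ^ 2 := by rw [← sq_abs y]; exact pow_le_pow_left₀ hε hy.le 2
    nlinarith [pow_le_pow_left₀ hε hy.le 3, mul_le_mul_of_nonneg_left h2 hε]

lemma approx3_eq_restrict_add (ν : Measure ℝ) (ε α₁ α₂ : ℝ) :
    approx3 ν ε α₁ α₂ = ν.restrict {y : ℝ | ε < |y|}
      + (ENNReal.ofReal α₁ • Measure.dirac (-(2 * ε))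
        + ENNReal.ofReal α₂ • Measure.dirac (2 * ε)) :=
  add_assoc _ _ _

lemma smul_dirac_add_smul_dirac_compl_eq_zero {ε : ℝ} (hε : 0 < ε) (c₁ c₂ : ℝ≥0∞) :
    (c₁ • Measure.dirac (-(2 * ε)) + c₂ • Measure.dirac (2 * ε)) {y : ℝ | ε < |y|}ᶜ = 0 := by
  have h2ε : |2 * ε| = 2 * ε := abs_of_pos (by positivity)
  simp [Measure.dirac_apply' _ (measurableSet_lt_abs ε).compl, h2ε, hε]

lemma Jfun3_approx3 {ν : Measure ℝ} {ε : ℝ} (hε : 0 < ε) (hA : ν {y : ℝ | ε < |y|} ≠ ∞)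
    (α₁ α₂ : ℝ) :
    Jfun3 ν (approx3 ν ε α₁ α₂) = ∫⁻ y in {y : ℝ | |y| ≤ ε}, ENNReal.ofReal (|y| ^ 3) ∂ν
      + (ENNReal.ofReal α₁ + ENNReal.ofReal α₂) * ENNReal.ofReal (8 * ε ^ 3) := by
  rw [approx3_eq_restrict_add, Jfun3, tvDist_restrict_add (measurableSet_lt_abs ε)
    (smul_dirac_add_smul_dirac_compl_eq_zero hε _ _) hA, lintegral_add_measure,
    compl_setOf_lt_abs, lintegral_smul_dirac_neg_add_smul_dirac (by rw [abs_neg]),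
    abs_of_pos (by positivity : 0 < 2 * ε)]
  ring_nf

lemma lintegral_sq_approx3 (ν : Measure ℝ) (ε α₁ α₂ : ℝ) :
    ∫⁻ y, ENNReal.ofReal (y ^ 2) ∂(approx3 ν ε α₁ α₂)
      = ∫⁻ y in {y : ℝ | ε < |y|}, ENNReal.ofReal (y ^ 2) ∂ν
        + (ENNReal.ofReal α₁ + ENNReal.ofReal α₂) * ENNReal.ofReal (4 * ε ^ 2) := by
  rw [approx3_eq_restrict_add, lintegral_add_measure,
    lintegral_smul_dirac_neg_add_smul_dirac (by rw [neg_sq])]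
  ring_nf

lemma approx3_apply_univ (ν : Measure ℝ) (ε α₁ α₂ : ℝ) :
    approx3 ν ε α₁ α₂ univ = ν {y : ℝ | ε < |y|} + (ENNReal.ofReal α₁ + ENNReal.ofReal α₂) := by
  simp [approx3_eq_restrict_add]

lemma ofReal_sq_mul_measure_le {ε : ℝ} (hε : 0 ≤ ε) (ν : Measure ℝ) :
    ENNReal.ofReal (ε ^ 2) * ν {y : ℝ | ε < |y|}
      ≤ ∫⁻ y in {y : ℝ | ε < |y|}, ENNReal.ofReal (y ^ 2) ∂ν := by
  rw [← setLIntegral_const]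
  refine setLIntegral_mono (by fun_prop) fun y (hy : ε < |y|) => ENNReal.ofReal_le_ofReal ?_
  rw [← sq_abs y]
  exact pow_le_pow_left₀ hε hy.le 2

lemma measure_lt_abs_ne_top {ν : Measure ℝ} {ε : ℝ} (hε : 0 < ε)
    (hν : ∫⁻ y, ENNReal.ofReal (y ^ 2) ∂ν ≠ ∞) : ν {y : ℝ | ε < |y|} ≠ ∞ := by
  have h := (ofReal_sq_mul_measure_le hε.le ν).trans (setLIntegral_le_lintegral _ _)
  exact (ENNReal.lt_top_of_mul_ne_top_right (ne_top_of_le_ne_top hν h) (by positivity)).ne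

lemma ofReal_setIntegral_sq {ν : Measure ℝ} (hν : Integrable (fun y => y ^ 2) ν) (s : Set ℝ) :
    ENNReal.ofReal (∫ y in s, y ^ 2 ∂ν) = ∫⁻ y in s, ENNReal.ofReal (y ^ 2) ∂ν :=
  ofReal_integral_eq_lintegral_ofReal hν.integrableOn (ae_of_all _ fun y => sq_nonneg y)

structure ApproxParams (ν : Measure ℝ) (Λ ε α₁ α₂ : ℝ) : Prop where
  eps_pos : 0 < ε
  nonneg_left : 0 ≤ α₁
  nonneg_right : 0 ≤ α₂
  mass_eq : (ν {y : ℝ | ε < |y|}).toReal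
      + (1 / (4 * ε ^ 2)) * (∫ y in {y : ℝ | |y| ≤ ε}, y ^ 2 ∂ν) = Λ
  atoms_eq : α₁ + α₂ = (1 / (4 * ε ^ 2)) * ∫ y in {y : ℝ | |y| ≤ ε}, y ^ 2 ∂ν

namespace ApproxParams

variable {ν : Measure ℝ} {Λ ε α₁ α₂ : ℝ}

lemma ofReal_add_ofReal_mul (h : ApproxParams ν Λ ε α₁ α₂) (c : ℝ) :
    (ENNReal.ofReal α₁ + ENNReal.ofReal α₂) * ENNReal.ofReal c
      = ENNReal.ofReal ((∫ y in {y : ℝ | |y| ≤ ε}, y ^ 2 ∂ν) * (c / (4 * ε ^ 2))) := by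
  rw [← ENNReal.ofReal_add h.nonneg_left h.nonneg_right, ← ENNReal.ofReal_mul (by
    linarith [h.nonneg_left, h.nonneg_right]), h.atoms_eq]
  ring_nf

lemma ofReal_mass (h : ApproxParams ν Λ ε α₁ α₂) (hν : ∫⁻ y, ENNReal.ofReal (y ^ 2) ∂ν ≠ ∞) :
    ENNReal.ofReal Λ = ν {y : ℝ | ε < |y|} + (ENNReal.ofReal α₁ + ENNReal.ofReal α₂) := by
  rw [← h.mass_eq, ← h.atoms_eq, ENNReal.ofReal_add ENNReal.toReal_nonneg
    (by linarith [h.nonneg_left, h.nonneg_right]), ENNReal.ofReal_toReal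
    (measure_lt_abs_ne_top h.eps_pos hν), ENNReal.ofReal_add h.nonneg_left h.nonneg_right]

lemma constraint3 (h : ApproxParams ν Λ ε α₁ α₂) (hν : Integrable (fun y => y ^ 2) ν) :
    Constraint3 ν Λ (approx3 ν ε α₁ α₂) := by
  have hfin := hν.lintegral_lt_top.ne
  have hmass : approx3 ν ε α₁ α₂ univ = ENNReal.ofReal Λ := by
    rw [approx3_apply_univ, h.ofReal_mass hfin]
  have hmom : ∫⁻ y, ENNReal.ofReal (y ^ 2) ∂(approx3 ν ε α₁ α₂)
      = ∫⁻ y, ENNReal.ofReal (y ^ 2) ∂ν := by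
    rw [lintegral_sq_approx3, h.ofReal_add_ofReal_mul, div_self (by have := h.eps_pos; positivity),
      mul_one, ofReal_setIntegral_sq hν, ← compl_setOf_lt_abs,
      lintegral_add_compl _ (measurableSet_lt_abs ε)]
  have hint : Integrable (fun y => y ^ 2) (approx3 ν ε α₁ α₂) :=
    ⟨by fun_prop, (hasFiniteIntegral_iff_ofReal (ae_of_all _ fun y => sq_nonneg y)).mpr
      (hmom ▸ hν.lintegral_lt_top)⟩
  refine ⟨⟨hmass ▸ ENNReal.ofReal_lt_top⟩, hmass, hint, ?_⟩
  rw [integral_eq_lintegral_of_nonneg_ae (ae_of_all _ fun y => sq_nonneg y) (by fun_prop),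
    integral_eq_lintegral_of_nonneg_ae (ae_of_all _ fun y => sq_nonneg y) (by fun_prop), hmom]

lemma Jfun3_approx3_eq (h : ApproxParams ν Λ ε α₁ α₂) (hν : Integrable (fun y => y ^ 2) ν) :
    Jfun3 ν (approx3 ν ε α₁ α₂) = ∫⁻ y in {y : ℝ | |y| ≤ ε}, ENNReal.ofReal (|y| ^ 3) ∂ν
      + ENNReal.ofReal (2 * ε * ∫ y in {y : ℝ | |y| ≤ ε}, y ^ 2 ∂ν) := by
  have hε := h.eps_pos
  rw [Jfun3_approx3 hε (measure_lt_abs_ne_top hε hν.lintegral_lt_top.ne),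
    h.ofReal_add_ofReal_mul]
  congr 2
  field_simp
  ring

lemma Jfun3_approx3_le (h : ApproxParams ν Λ ε α₁ α₂) (hν : Integrable (fun y => y ^ 2) ν) :
    Jfun3 ν (approx3 ν ε α₁ α₂)
      ≤ ENNReal.ofReal (3 * ε * ∫ y in {y : ℝ | |y| ≤ ε}, y ^ 2 ∂ν) := by
  have hε := h.eps_pos
  have hI : 0 ≤ ∫ y in {y : ℝ | |y| ≤ ε}, y ^ 2 ∂ν := integral_nonneg fun y => sq_nonneg y
  have hcube : ∫⁻ y in {y : ℝ | |y| ≤ ε}, ENNReal.ofReal (|y| ^ 3) ∂ν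
      ≤ ENNReal.ofReal (ε * ∫ y in {y : ℝ | |y| ≤ ε}, y ^ 2 ∂ν) := by
    rw [ENNReal.ofReal_mul hε.le, ofReal_setIntegral_sq hν,
      ← lintegral_const_mul' _ _ ENNReal.ofReal_ne_top]
    refine setLIntegral_mono (by fun_prop) fun y (hy : |y| ≤ ε) => ?_
    rw [← ENNReal.ofReal_mul hε.le, ← sq_abs y]
    exact ENNReal.ofReal_le_ofReal (by
      nlinarith [mul_le_mul_of_nonneg_right hy (sq_nonneg |y|)])
  calc Jfun3 ν (approx3 ν ε α₁ α₂)
      ≤ ENNReal.ofReal (ε * ∫ y in {y : ℝ | |y| ≤ ε}, y ^ 2 ∂ν)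
        + ENNReal.ofReal (2 * ε * ∫ y in {y : ℝ | |y| ≤ ε}, y ^ 2 ∂ν) := by
        rw [h.Jfun3_approx3_eq hν]; gcongr
    _ = ENNReal.ofReal (3 * ε * ∫ y in {y : ℝ | |y| ≤ ε}, y ^ 2 ∂ν) := by
        rw [← ENNReal.ofReal_add (by positivity) (by positivity)]; ring_nf

lemma Jfun3_approx3_add_eq_dualValue (h : ApproxParams ν Λ ε α₁ α₂)
    (hν : Integrable (fun y => y ^ 2) ν) :
    Jfun3 ν (approx3 ν ε α₁ α₂) + ENNReal.ofReal (4 * ε ^ 3) * ENNReal.ofReal Λ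
      = dualValue ν ε := by
  have hε := h.eps_pos
  have hI : 0 ≤ ∫ y in {y : ℝ | |y| ≤ ε}, y ^ 2 ∂ν := integral_nonneg fun y => sq_nonneg y
  rw [h.Jfun3_approx3_eq hν, h.ofReal_mass hν.lintegral_lt_top.ne, mul_add, mul_comm _ (_ + _),
    h.ofReal_add_ofReal_mul, dualValue_eq hε.le, lintegral_ofReal_abs_pow_three_add hε.le,
    ← ofReal_setIntegral_sq hν, ← ENNReal.ofReal_mul (by positivity)]
  have : 3 * ε * ∫ y in {y : ℝ | |y| ≤ ε}, y ^ 2 ∂ν = 2 * ε * (∫ y in {y : ℝ | |y| ≤ ε}, y ^ 2 ∂ν)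
      + (∫ y in {y : ℝ | |y| ≤ ε}, y ^ 2 ∂ν) * (4 * ε ^ 3 / (4 * ε ^ 2)) := by
    field_simp; ring
  rw [this, ENNReal.ofReal_add (by positivity) (by positivity)]
  ring

theorem Jfun3_approx3_le_of_constraint3 (h : ApproxParams ν Λ ε α₁ α₂)
    (hν : Integrable (fun y => y ^ 2) ν) {μ : Measure ℝ} (hμ : Constraint3 ν Λ μ) :
    Jfun3 ν (approx3 ν ε α₁ α₂) ≤ Jfun3 ν μ := by
  obtain ⟨hμfin, hμmass, hμint, hμmom⟩ := hμ
  have hmom : ∫⁻ y, ENNReal.ofReal (y ^ 2) ∂μ = ∫⁻ y, ENNReal.ofReal (y ^ 2) ∂ν := by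
    rw [← ofReal_integral_eq_lintegral_ofReal hμint (ae_of_all _ fun y => sq_nonneg y), hμmom,
      ofReal_integral_eq_lintegral_ofReal hν (ae_of_all _ fun y => sq_nonneg y)]
  have hdual := dualValue_le_Jfun3_add h.eps_pos.le hν.lintegral_lt_top.ne hmom
  rw [← h.Jfun3_approx3_add_eq_dualValue hν, hμmass] at hdual
  exact (ENNReal.add_le_add_iff_right (by finiteness)).mp hdual

lemma sq_mul_le_integral_sq (h : ApproxParams ν Λ ε α₁ α₂) (hν : Integrable (fun y => y ^ 2) ν) :
    ε ^ 2 * Λ ≤ ∫ y, y ^ 2 ∂ν := by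
  have hε := h.eps_pos
  have hcheb : ε ^ 2 * (ν {y : ℝ | ε < |y|}).toReal ≤ ∫ y in {y : ℝ | ε < |y|}, y ^ 2 ∂ν := by
    have := ENNReal.toReal_mono (ofReal_setIntegral_sq hν _ ▸ ENNReal.ofReal_ne_top)
      (ofReal_sq_mul_measure_le hε.le ν)
    rwa [ENNReal.toReal_mul, ENNReal.toReal_ofReal (by positivity), ← ofReal_setIntegral_sq hν,
      ENNReal.toReal_ofReal (integral_nonneg fun y => sq_nonneg y)] at this
  have hI : 0 ≤ ∫ y in {y : ℝ | |y| ≤ ε}, y ^ 2 ∂ν := integral_nonneg fun y => sq_nonneg y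
  rw [← integral_add_compl (measurableSet_lt_abs ε) hν, compl_setOf_lt_abs, ← h.mass_eq]
  have : ε ^ 2 * (1 / (4 * ε ^ 2)) = 1 / 4 := by field_simp
  nlinarith

end ApproxParams

lemma tendsto_setIntegral_sq_abs_le {ν : Measure ℝ} (hν : Integrable (fun y => y ^ 2) ν) :
    Tendsto (fun δ => ∫ y in {y : ℝ | |y| ≤ δ}, y ^ 2 ∂ν) (𝓝 0) (𝓝 0) := by
  have hmeas : ∀ δ : ℝ, MeasurableSet {y : ℝ | |y| ≤ δ} := fun δ =>
    measurableSet_le continuous_abs.measurable measurable_const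
  simp_rw [← integral_indicator (hmeas _)]
  suffices h : Tendsto (fun δ => ∫ y, {y : ℝ | |y| ≤ δ}.indicator (fun y => y ^ 2) y ∂ν) (𝓝 0)
      (𝓝 (∫ _, (0 : ℝ) ∂ν)) by rwa [integral_zero] at h
  refine tendsto_integral_filter_of_dominated_convergence (fun y => ‖y ^ 2‖)
    (Eventually.of_forall fun δ => (hν.indicator (hmeas δ)).aestronglyMeasurable)
    (Eventually.of_forall fun δ => ae_of_all _ fun y => norm_indicator_le_norm_self _ _)
    hν.norm (ae_of_all _ fun y => tendsto_const_nhds.congr' ?_)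
  rcases eq_or_ne y 0 with rfl | hy
  · exact Eventually.of_forall fun δ => by simp [indicator_apply]
  · filter_upwards [Iio_mem_nhds (abs_pos.mpr hy)] with δ (hδ : δ < |y|)
    exact (indicator_of_notMem (show y ∉ {y : ℝ | |y| ≤ δ} from not_le.mpr hδ) _).symm

theorem tendsto_sqrt_mul_Jfun3_approx3 {ν : Measure ℝ} (hν : Integrable (fun y => y ^ 2) ν)
    {ε α₁ α₂ : ℝ → ℝ} (h : ∀ Λ, 0 < Λ → ApproxParams ν Λ (ε Λ) (α₁ Λ) (α₂ Λ)) :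
    Tendsto (fun Λ => √Λ * (Jfun3 ν (approx3 ν (ε Λ) (α₁ Λ) (α₂ Λ))).toReal) atTop (𝓝 0) := by
  set M := ∫ y, y ^ 2 ∂ν
  have hεsqrt : ∀ Λ, 0 < Λ → ε Λ * √Λ ≤ √M := fun Λ hΛ => by
    rw [← Real.sqrt_sq (h Λ hΛ).eps_pos.le, ← Real.sqrt_mul (sq_nonneg _)]
    exact Real.sqrt_le_sqrt ((h Λ hΛ).sq_mul_le_integral_sq hν)
  have hε : Tendsto ε atTop (𝓝 0) := by
    refine squeeze_zero' ?_ ?_ ((tendsto_const_nhds (x := √M)).div_atTop Real.tendsto_sqrt_atTop)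
    · filter_upwards [eventually_gt_atTop 0] with Λ hΛ using (h Λ hΛ).eps_pos.le
    · filter_upwards [eventually_gt_atTop 0] with Λ hΛ
      exact (le_div_iff₀ (Real.sqrt_pos.mpr hΛ)).mpr (hεsqrt Λ hΛ)
  have hI := (tendsto_setIntegral_sq_abs_le hν).comp hε
  refine squeeze_zero' (Eventually.of_forall fun Λ => by positivity) ?_
    (by simpa using hI.const_mul (3 * √M))
  filter_upwards [eventually_gt_atTop 0] with Λ hΛ
  have hI₀ : 0 ≤ ∫ y in {y : ℝ | |y| ≤ ε Λ}, y ^ 2 ∂ν := integral_nonneg fun y => sq_nonneg y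
  have hJ := ENNReal.toReal_le_of_le_ofReal (by have := (h Λ hΛ).eps_pos; positivity)
    ((h Λ hΛ).Jfun3_approx3_le hν)
  calc √Λ * (Jfun3 ν (approx3 ν (ε Λ) (α₁ Λ) (α₂ Λ))).toReal
      ≤ √Λ * (3 * ε Λ * ∫ y in {y : ℝ | |y| ≤ ε Λ}, y ^ 2 ∂ν) := by gcongr
    _ = 3 * (ε Λ * √Λ) * ∫ y in {y : ℝ | |y| ≤ ε Λ}, y ^ 2 ∂ν := by ring
    _ ≤ 3 * √M * ∫ y in {y : ℝ | |y| ≤ ε Λ}, y ^ 2 ∂ν := by gcongr; exact hεsqrt Λ hΛ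

theorem stmt_9_general (ν : Measure ℝ)
    (hν2 : (∫⁻ y, ENNReal.ofReal (y ^ 2) ∂ν) < ⊤)
    (ε α₁ α₂ : ℝ → ℝ)
    (hε : ∀ Λ, 0 < Λ → 0 < ε Λ)
    (hεdef : ∀ Λ, 0 < Λ →
      (ν {y : ℝ | ε Λ < |y|}).toReal
        + (1 / (4 * ε Λ ^ 2)) * (∫ y in {y : ℝ | |y| ≤ ε Λ}, y ^ 2 ∂ν) = Λ)
    (hα₁ : ∀ Λ, 0 < Λ → 0 ≤ α₁ Λ) (hα₂ : ∀ Λ, 0 < Λ → 0 ≤ α₂ Λ)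
    (hαsum : ∀ Λ, 0 < Λ →
      α₁ Λ + α₂ Λ = (1 / (4 * ε Λ ^ 2)) * ∫ y in {y : ℝ | |y| ≤ ε Λ}, y ^ 2 ∂ν) :
    (∀ Λ, 0 < Λ → Constraint3 ν Λ (approx3 ν (ε Λ) (α₁ Λ) (α₂ Λ)) ∧
      (∀ μ : Measure ℝ, Constraint3 ν Λ μ →
        Jfun3 ν (approx3 ν (ε Λ) (α₁ Λ) (α₂ Λ)) ≤ Jfun3 ν μ) ∧
      Jfun3 ν (approx3 ν (ε Λ) (α₁ Λ) (α₂ Λ)) ≤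
        ENNReal.ofReal (3 * ε Λ * ∫ y in {y : ℝ | |y| ≤ ε Λ}, y ^ 2 ∂ν)) ∧
    Filter.Tendsto (fun Λ => Real.sqrt Λ * (Jfun3 ν (approx3 ν (ε Λ) (α₁ Λ) (α₂ Λ))).toReal)
      Filter.atTop (nhds 0) := by
  have hν : Integrable (fun y => y ^ 2) ν :=
    ⟨by fun_prop, (hasFiniteIntegral_iff_ofReal (ae_of_all _ fun y => sq_nonneg y)).mpr hν2⟩
  have h : ∀ Λ, 0 < Λ → ApproxParams ν Λ (ε Λ) (α₁ Λ) (α₂ Λ) := fun Λ hΛ =>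
    ⟨hε Λ hΛ, hα₁ Λ hΛ, hα₂ Λ hΛ, hεdef Λ hΛ, hαsum Λ hΛ⟩
  exact ⟨fun Λ hΛ => ⟨(h Λ hΛ).constraint3 hν,
    fun μ hμ => (h Λ hΛ).Jfun3_approx3_le_of_constraint3 hν hμ, (h Λ hΛ).Jfun3_approx3_le hν⟩,
    tendsto_sqrt_mul_Jfun3_approx3 hν h⟩

/-- The case `n = 3`: `ν̄_ε = 1_{|y|>ε} ν + α₁ δ_{-2ε} + α₂ δ_{2ε}` solves problem `Ω_{3,Λ}`,
the optimal value satisfies `E_3(Λ) ≤ 3 ε(Λ) ∫_{|y|≤ε(Λ)} y² ν(dy)`, and in particular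
`E_3(Λ) = o(Λ^{-1/2})` as `Λ → ∞`. -/
theorem stmt_9 (ν : Measure ℝ)
    (hν0 : ν {0} = 0) (hac : ν ≪ volume) (hνinf : ν Set.univ = ⊤)
    (hν2 : (∫⁻ y, ENNReal.ofReal (y ^ 2) ∂ν) < ⊤)
    (hν3 : (∫⁻ y, ENNReal.ofReal (|y| ^ 3) ∂ν) < ⊤)
    (ε α₁ α₂ : ℝ → ℝ)
    (hε : ∀ Λ, 0 < Λ → 0 < ε Λ)
    (hεdef : ∀ Λ, 0 < Λ →
      (ν {y : ℝ | ε Λ < |y|}).toReal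
        + (1 / (4 * ε Λ ^ 2)) * (∫ y in {y : ℝ | |y| ≤ ε Λ}, y ^ 2 ∂ν) = Λ)
    (hα₁ : ∀ Λ, 0 < Λ → 0 ≤ α₁ Λ) (hα₂ : ∀ Λ, 0 < Λ → 0 ≤ α₂ Λ)
    (hαsum : ∀ Λ, 0 < Λ →
      α₁ Λ + α₂ Λ = (1 / (4 * ε Λ ^ 2)) * ∫ y in {y : ℝ | |y| ≤ ε Λ}, y ^ 2 ∂ν) :
    (∀ Λ, 0 < Λ → Constraint3 ν Λ (approx3 ν (ε Λ) (α₁ Λ) (α₂ Λ)) ∧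
      (∀ μ : Measure ℝ, Constraint3 ν Λ μ →
        Jfun3 ν (approx3 ν (ε Λ) (α₁ Λ) (α₂ Λ)) ≤ Jfun3 ν μ) ∧
      Jfun3 ν (approx3 ν (ε Λ) (α₁ Λ) (α₂ Λ)) ≤
        ENNReal.ofReal (3 * ε Λ * ∫ y in {y : ℝ | |y| ≤ ε Λ}, y ^ 2 ∂ν)) ∧
    Filter.Tendsto (fun Λ => Real.sqrt Λ * (Jfun3 ν (approx3 ν (ε Λ) (α₁ Λ) (α₂ Λ))).toReal)
      Filter.atTop (nhds 0) :=
  stmt_9_general ν hν2 ε α₁ α₂ hε hεdef hα₁ hα₂ hαsum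
end

section
/- Let ν be a Lévy measure on ℝ that is absolutely continuous with respect to Lebesgue measure, with ν(ℝ) = ∞ and ∫_ℝ y² ν(dy) < ∞. For each Λ > 0 large enough let ε(Λ) > 0 be the solution of ∫_{{|y|>ε}} ν(dy) + (1/(4ε²)) ∫_{{|y|≤ε}} y² ν(dy) = Λ. Then lim_{Λ→∞} ε(Λ)² Λ = 0. -/
/-!
Put `M(ε) = ∫ min(ε², y²) dν`. Splitting the integral at `|y| = ε`, the defining equation gives
`ε(Λ)² Λ ≤ M(ε(Λ)) ≤ ∫ y² dν`, so `ε(Λ) → 0`; and `M(ε) → 0` as `ε → 0` by dominated convergence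
with dominating function `y²`.
-/

open MeasureTheory Filter Topology

lemma tendsto_zero_of_sq_mul_le {f : ℝ → ℝ} {C : ℝ} (h : ∀ᶠ x in atTop, f x ^ 2 * x ≤ C) :
    Tendsto f atTop (𝓝 0) := by
  have hbound : Tendsto (fun x => √(C / x)) atTop (𝓝 0) := by
    simpa using (tendsto_const_nhds.div_atTop tendsto_id).sqrt
  refine squeeze_zero_norm' ?_ hbound
  filter_upwards [h, eventually_gt_atTop 0] with x hx hx0
  exact Real.abs_le_sqrt ((le_div_iff₀ hx0).2 hx)

lemma Real.norm_min_sq_le (ε y : ℝ) : ‖min (ε ^ 2) (y ^ 2)‖ ≤ y ^ 2 := by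
  rw [Real.norm_of_nonneg (by positivity)]
  exact min_le_right _ _

namespace MeasureTheory

variable {ν : Measure ℝ}

lemma integrable_sq_of_lintegral_lt_top (h : ∫⁻ y, ENNReal.ofReal (y ^ 2) ∂ν < ⊤) :
    Integrable (fun y : ℝ => y ^ 2) ν :=
  ⟨(measurable_id.pow_const 2).aestronglyMeasurable,
    (hasFiniteIntegral_iff_ofReal (ae_of_all _ fun y => sq_nonneg y)).2 h⟩

lemma integrable_min_sq (h : Integrable (fun y : ℝ => y ^ 2) ν) (ε : ℝ) :
    Integrable (fun y => min (ε ^ 2) (y ^ 2)) ν :=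
  h.mono' (by fun_prop) <| ae_of_all _ (Real.norm_min_sq_le ε)

namespace Measure

variable (ν) in
noncomputable def truncatedSecondMoment (ε : ℝ) : ℝ := ∫ y, min (ε ^ 2) (y ^ 2) ∂ν

lemma truncatedSecondMoment_le (h : Integrable (fun y : ℝ => y ^ 2) ν) (ε : ℝ) :
    ν.truncatedSecondMoment ε ≤ ∫ y, y ^ 2 ∂ν :=
  integral_mono (integrable_min_sq h ε) h fun _ => min_le_right _ _

lemma truncatedSecondMoment_eq (h : Integrable (fun y : ℝ => y ^ 2) ν) {ε : ℝ} (hε : 0 ≤ ε) :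
    ν.truncatedSecondMoment ε =
      (∫ y in {y : ℝ | |y| ≤ ε}, y ^ 2 ∂ν) + ε ^ 2 * (ν {y : ℝ | ε < |y|}).toReal := by
  have hs : MeasurableSet {y : ℝ | |y| ≤ ε} := measurableSet_le (by fun_prop) (by fun_prop)
  have hcompl : {y : ℝ | |y| ≤ ε}ᶜ = {y : ℝ | ε < |y|} := by ext; simp
  rw [truncatedSecondMoment, ← integral_add_compl hs (integrable_min_sq h ε), hcompl,
    setIntegral_congr_fun hs fun y hy => min_eq_right (sq_le_sq' (abs_le.1 hy).1 (abs_le.1 hy).2),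
    setIntegral_congr_fun (hcompl ▸ hs.compl) fun y hy => min_eq_left (sq_le_sq.2 ?_),
    setIntegral_const, measureReal_def, smul_eq_mul, mul_comm]
  exact (abs_of_nonneg hε).symm ▸ le_of_lt hy

lemma tendsto_truncatedSecondMoment (h : Integrable (fun y : ℝ => y ^ 2) ν) :
    Tendsto ν.truncatedSecondMoment (𝓝 0) (𝓝 0) := by
  have hpointwise : ∀ᵐ y ∂ν, Tendsto (fun ε : ℝ => min (ε ^ 2) (y ^ 2)) (𝓝 0) (𝓝 0) :=
    ae_of_all _ fun y => by
      simpa [min_eq_left (sq_nonneg y)] using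
        (show Continuous fun ε : ℝ => min (ε ^ 2) (y ^ 2) by fun_prop).tendsto 0
  have := tendsto_integral_filter_of_dominated_convergence _
    (.of_forall fun ε => (integrable_min_sq h ε).aestronglyMeasurable)
    (.of_forall fun ε => ae_of_all _ (Real.norm_min_sq_le ε)) h hpointwise
  rwa [integral_zero] at this

lemma sq_mul_le_truncatedSecondMoment (h : Integrable (fun y : ℝ => y ^ 2) ν) {ε : ℝ}
    (hε : 0 < ε) :
    ε ^ 2 * ((ν {y : ℝ | ε < |y|}).toReal + 1 / (4 * ε ^ 2) * ∫ y in {y : ℝ | |y| ≤ ε}, y ^ 2 ∂ν)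
      ≤ ν.truncatedSecondMoment ε := by
  have hinner : 0 ≤ ∫ y in {y : ℝ | |y| ≤ ε}, y ^ 2 ∂ν :=
    setIntegral_nonneg_of_ae (ae_of_all _ fun y => sq_nonneg y)
  rw [truncatedSecondMoment_eq h hε.le]
  calc _ = ε ^ 2 * (ν {y : ℝ | ε < |y|}).toReal + (∫ y in {y : ℝ | |y| ≤ ε}, y ^ 2 ∂ν) / 4 := by
        field_simp
    _ ≤ _ := by linarith

end Measure

end MeasureTheory

theorem stmt_10_general (ν : Measure ℝ)
    (hν2 : (∫⁻ y, ENNReal.ofReal (y ^ 2) ∂ν) < ⊤)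
    (ε : ℝ → ℝ) (Λ₀ : ℝ)
    (hε : ∀ Λ, Λ₀ ≤ Λ → 0 < ε Λ)
    (hεdef : ∀ Λ, Λ₀ ≤ Λ →
      (ν {y : ℝ | ε Λ < |y|}).toReal
        + (1 / (4 * ε Λ ^ 2)) * (∫ y in {y : ℝ | |y| ≤ ε Λ}, y ^ 2 ∂ν) = Λ) :
    Filter.Tendsto (fun Λ => ε Λ ^ 2 * Λ) Filter.atTop (nhds 0) := by
  have hsq := integrable_sq_of_lintegral_lt_top hν2
  have hbound : ∀ᶠ Λ in atTop, ε Λ ^ 2 * Λ ≤ ν.truncatedSecondMoment (ε Λ) := by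
    filter_upwards [eventually_ge_atTop Λ₀] with Λ hΛ
    simpa only [hεdef Λ hΛ] using Measure.sq_mul_le_truncatedSecondMoment hsq (hε Λ hΛ)
  have hε0 : Tendsto ε atTop (𝓝 0) :=
    tendsto_zero_of_sq_mul_le <|
      hbound.mono fun Λ hΛ => hΛ.trans (Measure.truncatedSecondMoment_le hsq _)
  refine squeeze_zero' ?_ hbound ((Measure.tendsto_truncatedSecondMoment hsq).comp hε0)
  filter_upwards [eventually_ge_atTop 0] with Λ hΛ
  positivity

/-- If `ν` is an absolutely continuous Lévy measure with `ν(ℝ) = ∞` and `∫ y² ν(dy) < ∞`, and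
for large `Λ`, `ε(Λ) > 0` solves
`ν({|y|>ε}) + (1/(4ε²)) ∫_{|y|≤ε} y² ν(dy) = Λ`, then `ε(Λ)² Λ → 0` as `Λ → ∞`. -/
theorem stmt_10 (ν : Measure ℝ)
    (hν0 : ν {0} = 0) (hac : ν ≪ volume) (hνinf : ν Set.univ = ⊤)
    (hν2 : (∫⁻ y, ENNReal.ofReal (y ^ 2) ∂ν) < ⊤)
    (ε : ℝ → ℝ) (Λ₀ : ℝ)
    (hε : ∀ Λ, Λ₀ ≤ Λ → 0 < ε Λ)
    (hεdef : ∀ Λ, Λ₀ ≤ Λ →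
      (ν {y : ℝ | ε Λ < |y|}).toReal
        + (1 / (4 * ε Λ ^ 2)) * (∫ y in {y : ℝ | |y| ≤ ε Λ}, y ^ 2 ∂ν) = Λ) :
    Filter.Tendsto (fun Λ => ε Λ ^ 2 * Λ) Filter.atTop (nhds 0) :=
  stmt_10_general ν hν2 ε Λ₀ hε hεdef
end

section
/- Let ν be a Lévy measure on ℝ such that ν((x,∞))/g(x) → c_+ as x ↓ 0, where c_+ > 0 and g : (0,∞) → (0,∞) is regularly varying at 0 with index −α for some α ∈ (0,2). Then for every p > α with ∫_{(0,1]} y^p ν(dy) < ∞, lim_{ε↓0} [ ∫_{(0,ε]} y^p ν(dy) ] / [ ε^p ν((ε,∞)) ] = α/(p − α). -/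
/-!
Cut `(0, ε]` into the geometric shells `(lⁿ⁺¹ε, lⁿε]`, `0 < l < 1`. On the `n`-th shell `y ^ p`
is `ε ^ p (l ^ p) ^ n` up to a factor `l ^ p`, so the ratio is squeezed between `l ^ p S_l(ε)` and
`S_l(ε) = Σ (l ^ p) ^ n ν(shellₙ) / ν((ε, ∞))`. By regular variation the `n`-th term tends to
`(l ^ p) ^ n (q ^ (n + 1) - q ^ n)` with `q = l ^ (-α)`, and a discrete Potter bound
`ν((lε, ∞)) ≤ K ν((ε, ∞))` with `K l ^ p < 1` dominates the series, so
`S_l(ε) → (q - 1) / (1 - l ^ (p - α))`. As `l ↑ 1` this tends to `α / (p - α)`, the ratio of the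
derivatives of `l ^ (-α)` and `l ^ (p - α)` at `1`.
-/

open MeasureTheory Filter Set
open scoped ENNReal Topology

def IsRegularlyVaryingAtZero (f : ℝ → ℝ) (ρ : ℝ) : Prop :=
  ∀ c : ℝ, 0 < c → Tendsto (fun x => f (c * x) / f x) (𝓝[>] 0) (𝓝 (c ^ ρ))

theorem tendsto_const_mul_nhdsGT_zero {c : ℝ} (hc : 0 < c) :
    Tendsto (fun x : ℝ => c * x) (𝓝[>] 0) (𝓝[>] 0) :=
  tendsto_comap.mono_left (comap_mulLeft_nhdsGT_zero hc).ge

theorem eventually_forall_pow_mul_nhdsGT_zero {l : ℝ} (hl0 : 0 < l) (hl1 : l ≤ 1)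
    {P : ℝ → Prop} (h : ∀ᶠ x in 𝓝[>] 0, P x) : ∀ᶠ x in 𝓝[>] 0, ∀ n : ℕ, P (l ^ n * x) := by
  obtain ⟨x₀, hx₀, hP⟩ := mem_nhdsGT_iff_exists_Ioc_subset.1 h
  filter_upwards [Ioc_mem_nhdsGT hx₀] with x ⟨hx0, hxx₀⟩ n
  exact hP ⟨by positivity, (mul_le_of_le_one_left hx0.le (pow_le_one₀ hl0.le hl1)).trans hxx₀⟩

namespace IsRegularlyVaryingAtZero

theorem of_tendsto_div {f g : ℝ → ℝ} {ρ c₀ : ℝ} (hg : IsRegularlyVaryingAtZero g ρ)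
    (hg0 : ∀ x, 0 < x → g x ≠ 0) (hfg : Tendsto (fun x => f x / g x) (𝓝[>] 0) (𝓝 c₀))
    (hc₀ : c₀ ≠ 0) : IsRegularlyVaryingAtZero f ρ := by
  intro c hc
  have h := ((hfg.comp (tendsto_const_mul_nhdsGT_zero hc)).mul (hg c hc)).div hfg hc₀
  rw [mul_div_right_comm, div_self hc₀, one_mul] at h
  refine h.congr' ?_
  filter_upwards [self_mem_nhdsWithin] with x (hx : 0 < x)
  change f (c * x) / g (c * x) * (g (c * x) / g x) / (f x / g x) = _
  rw [div_mul_div_cancel₀ (hg0 _ (mul_pos hc hx)), div_div_div_cancel_right₀ (hg0 x hx)]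

/-- A discrete form of Potter's bound. -/
theorem eventually_le_pow_mul {f : ℝ → ℝ} {ρ l K : ℝ} (hf : IsRegularlyVaryingAtZero f ρ)
    (hpos : ∀ᶠ x in 𝓝[>] 0, 0 < f x) (hl0 : 0 < l) (hl1 : l ≤ 1) (hK : l ^ ρ < K) :
    ∀ᶠ x in 𝓝[>] 0, ∀ n : ℕ, f (l ^ n * x) ≤ K ^ n * f x := by
  have hK0 : 0 ≤ K := (Real.rpow_pos_of_pos hl0 ρ).le.trans hK.le
  have hstep : ∀ᶠ x in 𝓝[>] 0, f (l * x) ≤ K * f x := by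
    filter_upwards [hpos, (hf l hl0).eventually (gt_mem_nhds hK)] with x hx hlt
    exact ((div_lt_iff₀ hx).1 hlt).le
  filter_upwards [eventually_forall_pow_mul_nhdsGT_zero hl0 hl1 hstep] with x hx n
  induction n with
  | zero => simp
  | succ n ih =>
    calc f (l ^ (n + 1) * x) = f (l * (l ^ n * x)) := by rw [pow_succ', mul_assoc]
      _ ≤ K * f (l ^ n * x) := hx n
      _ ≤ K * (K ^ n * f x) := mul_le_mul_of_nonneg_left ih hK0
      _ = K ^ (n + 1) * f x := by ring

end IsRegularlyVaryingAtZero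

theorem iUnion_Ioc_pow_mul {l x : ℝ} (hl0 : 0 < l) (hl1 : l < 1) (hx : 0 < x) :
    ⋃ n : ℕ, Ioc (l ^ (n + 1) * x) (l ^ n * x) = Ioc 0 x := by
  ext y
  simp only [mem_iUnion, mem_Ioc]
  constructor
  · rintro ⟨n, hlo, hhi⟩
    exact ⟨lt_of_le_of_lt (by positivity) hlo,
      hhi.trans (mul_le_of_le_one_left hx.le (pow_le_one₀ hl0.le hl1.le))⟩
  · rintro ⟨hy0, hyx⟩
    obtain ⟨n, hlo, hhi⟩ :=
      exists_nat_pow_near_of_lt_one (div_pos hy0 hx) ((div_le_one hx).2 hyx) hl0 hl1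
    exact ⟨n, (lt_div_iff₀ hx).1 hlo, (div_le_iff₀ hx).1 hhi⟩

theorem pairwise_disjoint_Ioc_pow_mul {l x : ℝ} (hl0 : 0 ≤ l) (hl1 : l ≤ 1) (hx : 0 ≤ x) :
    Pairwise (Function.onFun Disjoint fun n : ℕ => Ioc (l ^ (n + 1) * x) (l ^ n * x)) :=
  Antitone.pairwise_disjoint_on_Ioc_succ (f := fun n : ℕ => l ^ n * x)
    fun _ _ hmn => mul_le_mul_of_nonneg_right (pow_le_pow_of_le_one hl0 hl1 hmn) hx

section RpowMoment

variable (μ : Measure ℝ) {p : ℝ}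

theorem ofReal_rpow_mul_le_setLIntegral {a b : ℝ} (ha : 0 ≤ a) (hp : 0 ≤ p) :
    ENNReal.ofReal (a ^ p) * μ (Ioc a b) ≤ ∫⁻ y in Ioc a b, ENNReal.ofReal (y ^ p) ∂μ := by
  rw [← setLIntegral_const]
  exact setLIntegral_mono (by fun_prop) fun y hy =>
    ENNReal.ofReal_le_ofReal (Real.rpow_le_rpow ha hy.1.le hp)

theorem setLIntegral_le_ofReal_rpow_mul {a b : ℝ} (ha : 0 ≤ a) (hp : 0 ≤ p) :
    ∫⁻ y in Ioc a b, ENNReal.ofReal (y ^ p) ∂μ ≤ ENNReal.ofReal (b ^ p) * μ (Ioc a b) := by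
  rw [← setLIntegral_const]
  exact setLIntegral_mono measurable_const fun y hy =>
    ENNReal.ofReal_le_ofReal (Real.rpow_le_rpow (ha.trans hy.1.le) hy.2 hp)

/-- On `(lⁿ⁺¹ x, lⁿ x]`, `y ^ p` lies between `l ^ p` and `1` times `x ^ p (l ^ p) ^ n`. -/
theorem lintegral_Ioc_rpow_bounds {l x : ℝ} (hl0 : 0 < l) (hl1 : l < 1) (hx : 0 < x)
    (hp : 0 ≤ p) :
    ENNReal.ofReal (l ^ p * x ^ p) *
        ∑' n : ℕ, ENNReal.ofReal ((l ^ p) ^ n) * μ (Ioc (l ^ (n + 1) * x) (l ^ n * x)) ≤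
      ∫⁻ y in Ioc 0 x, ENNReal.ofReal (y ^ p) ∂μ ∧
    ∫⁻ y in Ioc 0 x, ENNReal.ofReal (y ^ p) ∂μ ≤
      ENNReal.ofReal (x ^ p) *
        ∑' n : ℕ, ENNReal.ofReal ((l ^ p) ^ n) * μ (Ioc (l ^ (n + 1) * x) (l ^ n * x)) := by
  have hsplit : ∫⁻ y in Ioc 0 x, ENNReal.ofReal (y ^ p) ∂μ =
      ∑' n : ℕ, ∫⁻ y in Ioc (l ^ (n + 1) * x) (l ^ n * x), ENNReal.ofReal (y ^ p) ∂μ := by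
    rw [← iUnion_Ioc_pow_mul hl0 hl1 hx, lintegral_iUnion (fun _ => measurableSet_Ioc)
      (pairwise_disjoint_Ioc_pow_mul hl0.le hl1.le hx.le)]
  have hend : ∀ n : ℕ, (l ^ n * x) ^ p = x ^ p * (l ^ p) ^ n := fun n => by
    rw [Real.mul_rpow (by positivity) hx.le, ← Real.rpow_pow_comm hl0.le, mul_comm]
  rw [hsplit, ← ENNReal.tsum_mul_left, ← ENNReal.tsum_mul_left]
  constructor
  · refine ENNReal.tsum_le_tsum fun n => ?_
    rw [← mul_assoc, ← ENNReal.ofReal_mul (by positivity),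
      show l ^ p * x ^ p * (l ^ p) ^ n = (l ^ (n + 1) * x) ^ p by rw [hend]; ring]
    exact ofReal_rpow_mul_le_setLIntegral μ (by positivity) hp
  · refine ENNReal.tsum_le_tsum fun n => ?_
    rw [← mul_assoc, ← ENNReal.ofReal_mul (by positivity), ← hend]
    exact setLIntegral_le_ofReal_rpow_mul μ (by positivity) hp

theorem toReal_lintegral_Ioc_rpow_bounds {l x : ℝ} (hl0 : 0 < l) (hl1 : l < 1) (hx : 0 < x)
    (hp : 0 ≤ p) (hfin : ∀ n : ℕ, μ (Ioc (l ^ (n + 1) * x) (l ^ n * x)) ≠ ⊤)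
    (hsum : Summable fun n : ℕ => (l ^ p) ^ n * μ.real (Ioc (l ^ (n + 1) * x) (l ^ n * x))) :
    l ^ p * x ^ p * ∑' n : ℕ, (l ^ p) ^ n * μ.real (Ioc (l ^ (n + 1) * x) (l ^ n * x)) ≤
      (∫⁻ y in Ioc 0 x, ENNReal.ofReal (y ^ p) ∂μ).toReal ∧
    (∫⁻ y in Ioc 0 x, ENNReal.ofReal (y ^ p) ∂μ).toReal ≤
      x ^ p * ∑' n : ℕ, (l ^ p) ^ n * μ.real (Ioc (l ^ (n + 1) * x) (l ^ n * x)) := by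
  have htsum : ∑' n : ℕ, ENNReal.ofReal ((l ^ p) ^ n) * μ (Ioc (l ^ (n + 1) * x) (l ^ n * x)) =
      ENNReal.ofReal (∑' n : ℕ, (l ^ p) ^ n * μ.real (Ioc (l ^ (n + 1) * x) (l ^ n * x))) := by
    rw [ENNReal.ofReal_tsum_of_nonneg (fun n => by positivity) hsum]
    refine tsum_congr fun n => ?_
    rw [ENNReal.ofReal_mul (by positivity), measureReal_def, ENNReal.ofReal_toReal (hfin n)]
  obtain ⟨hlo, hhi⟩ := lintegral_Ioc_rpow_bounds μ hl0 hl1 hx hp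
  rw [htsum, ← ENNReal.ofReal_mul (by positivity)] at hlo hhi
  exact ⟨(ENNReal.ofReal_le_iff_le_toReal (ne_top_of_le_ne_top ENNReal.ofReal_ne_top hhi)).1 hlo,
    ENNReal.toReal_le_of_le_ofReal (by positivity) hhi⟩

end RpowMoment

noncomputable def shellRatio (ν : Measure ℝ) (l x : ℝ) (n : ℕ) : ℝ :=
  ν.real (Ioc (l ^ (n + 1) * x) (l ^ n * x)) / ν.real (Ioi x)

section ShellRatio

variable {ν : Measure ℝ} {ρ l : ℝ}

theorem measure_Ioi_ne_top_of_eventually_pos (hpos : ∀ᶠ x in 𝓝[>] 0, 0 < ν.real (Ioi x))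
    {y : ℝ} (hy : 0 < y) : ν (Ioi y) ≠ ⊤ := by
  obtain ⟨x, hx, hxy⟩ := (hpos.and (Ioo_mem_nhdsGT hy)).exists
  exact ne_top_of_le_ne_top (ENNReal.toReal_pos_iff.1 hx).2.ne
    (measure_mono (Ioi_subset_Ioi hxy.2.le))

theorem tendsto_shellRatio (hU : IsRegularlyVaryingAtZero (fun x => ν.real (Ioi x)) ρ)
    (hpos : ∀ᶠ x in 𝓝[>] 0, 0 < ν.real (Ioi x)) (hl0 : 0 < l) (hl1 : l ≤ 1) (n : ℕ) :
    Tendsto (fun x => shellRatio ν l x n) (𝓝[>] 0) (𝓝 ((l ^ ρ) ^ (n + 1) - (l ^ ρ) ^ n)) := by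
  have hpow : ∀ k : ℕ, Tendsto (fun x => ν.real (Ioi (l ^ k * x)) / ν.real (Ioi x)) (𝓝[>] 0)
      (𝓝 ((l ^ ρ) ^ k)) := fun k => by
    rw [Real.rpow_pow_comm hl0.le]
    exact hU _ (pow_pos hl0 k)
  refine ((hpow (n + 1)).sub (hpow n)).congr' ?_
  filter_upwards [self_mem_nhdsWithin] with x (hx : 0 < x)
  have hle : l ^ (n + 1) * x ≤ l ^ n * x :=
    mul_le_mul_of_nonneg_right (pow_le_pow_of_le_one hl0.le hl1 n.le_succ) hx.le
  rw [shellRatio, ← Ioi_sdiff_Ioi, measureReal_sdiff (Ioi_subset_Ioi hle) measurableSet_Ioi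
    (measure_Ioi_ne_top_of_eventually_pos hpos (by positivity)), sub_div]

theorem exists_summable_bound_shellRatio {r : ℝ}
    (hU : IsRegularlyVaryingAtZero (fun x => ν.real (Ioi x)) ρ)
    (hpos : ∀ᶠ x in 𝓝[>] 0, 0 < ν.real (Ioi x)) (hl0 : 0 < l) (hl1 : l ≤ 1) (hr : 0 < r)
    (hrl : r * l ^ ρ < 1) : ∃ bound : ℕ → ℝ, Summable bound ∧
      ∀ᶠ x in 𝓝[>] 0, ∀ n : ℕ, ‖r ^ n * shellRatio ν l x n‖ ≤ bound n := by
  obtain ⟨K, hlK, hKr⟩ := exists_between ((lt_div_iff₀' hr).2 hrl)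
  have hK0 : 0 < K := (Real.rpow_pos_of_pos hl0 ρ).trans hlK
  refine ⟨fun n => K * (r * K) ^ n, (summable_geometric_of_lt_one (by positivity)
    ((lt_div_iff₀' hr).1 hKr)).mul_left K, ?_⟩
  filter_upwards [hpos, self_mem_nhdsWithin, hU.eventually_le_pow_mul hpos hl0 hl1 hlK]
    with x hUx (hx : 0 < x) hPotter n
  have hshell : shellRatio ν l x n ≤ K ^ (n + 1) := by
    rw [shellRatio, div_le_iff₀ hUx]
    exact (measureReal_mono Ioc_subset_Ioi_self
      (measure_Ioi_ne_top_of_eventually_pos hpos (by positivity))).trans (hPotter (n + 1))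
  rw [Real.norm_of_nonneg (by unfold shellRatio; positivity)]
  calc r ^ n * shellRatio ν l x n ≤ r ^ n * K ^ (n + 1) :=
        mul_le_mul_of_nonneg_left hshell (by positivity)
    _ = K * (r * K) ^ n := by ring

theorem tendsto_tsum_shellRatio {r : ℝ}
    (hU : IsRegularlyVaryingAtZero (fun x => ν.real (Ioi x)) ρ)
    (hpos : ∀ᶠ x in 𝓝[>] 0, 0 < ν.real (Ioi x)) (hl0 : 0 < l) (hl1 : l ≤ 1) (hr : 0 < r)
    (hrl : r * l ^ ρ < 1) :
    Tendsto (fun x => ∑' n : ℕ, r ^ n * shellRatio ν l x n) (𝓝[>] 0)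
      (𝓝 ((l ^ ρ - 1) / (1 - r * l ^ ρ))) := by
  obtain ⟨bound, hbound, hle⟩ := exists_summable_bound_shellRatio hU hpos hl0 hl1 hr hrl
  have hsum : ∑' n : ℕ, r ^ n * ((l ^ ρ) ^ (n + 1) - (l ^ ρ) ^ n) =
      (l ^ ρ - 1) / (1 - r * l ^ ρ) := by
    simp_rw [show ∀ n : ℕ, r ^ n * ((l ^ ρ) ^ (n + 1) - (l ^ ρ) ^ n) =
      (l ^ ρ - 1) * (r * l ^ ρ) ^ n from fun n => by ring]
    rw [tsum_mul_left, tsum_geometric_of_lt_one (by positivity) hrl, div_eq_mul_inv]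
  rw [← hsum]
  exact tendsto_tsum_of_dominated_convergence hbound
    (fun n => (tendsto_shellRatio hU hpos hl0 hl1 n).const_mul _) hle

theorem eventually_lintegral_rpow_div_mem_Icc {p : ℝ}
    (hU : IsRegularlyVaryingAtZero (fun x => ν.real (Ioi x)) ρ)
    (hpos : ∀ᶠ x in 𝓝[>] 0, 0 < ν.real (Ioi x)) (hl0 : 0 < l) (hl1 : l < 1) (hp : 0 ≤ p)
    (hrl : l ^ p * l ^ ρ < 1) :
    ∀ᶠ x in 𝓝[>] 0,
      (∫⁻ y in Ioc 0 x, ENNReal.ofReal (y ^ p) ∂ν).toReal / (x ^ p * ν.real (Ioi x)) ∈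
        Icc (l ^ p * ∑' n : ℕ, (l ^ p) ^ n * shellRatio ν l x n)
          (∑' n : ℕ, (l ^ p) ^ n * shellRatio ν l x n) := by
  obtain ⟨bound, hbound, hle⟩ :=
    exists_summable_bound_shellRatio hU hpos hl0 hl1.le (Real.rpow_pos_of_pos hl0 p) hrl
  filter_upwards [hpos, self_mem_nhdsWithin, hle] with x hUx (hx : 0 < x) hx_le
  have hsum := hbound.of_norm_bounded hx_le
  simp only [shellRatio, ← mul_div_assoc] at hsum ⊢
  rw [summable_div_const_iff hUx.ne'] at hsum
  rw [tsum_div_const]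
  set T := ∑' n : ℕ, (l ^ p) ^ n * ν.real (Ioc (l ^ (n + 1) * x) (l ^ n * x))
  obtain ⟨hlo, hhi⟩ := toReal_lintegral_Ioc_rpow_bounds ν hl0 hl1 hx hp
    (fun n => measure_ne_top_of_subset Ioc_subset_Ioi_self
      (measure_Ioi_ne_top_of_eventually_pos hpos (by positivity))) hsum
  have hxU : 0 < x ^ p * ν.real (Ioi x) := by positivity
  constructor
  · rw [le_div_iff₀ hxU]
    calc l ^ p * (T / ν.real (Ioi x)) * (x ^ p * ν.real (Ioi x)) = l ^ p * x ^ p * T := by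
          field_simp
      _ ≤ _ := hlo
  · rw [div_le_iff₀ hxU]
    calc _ ≤ x ^ p * T := hhi
      _ = T / ν.real (Ioi x) * (x ^ p * ν.real (Ioi x)) := by field_simp

end ShellRatio

theorem tendsto_rpow_sub_one_div_one_sub_rpow {ρ σ : ℝ} (hσ : σ ≠ 0) :
    Tendsto (fun l : ℝ => (l ^ ρ - 1) / (1 - l ^ σ)) (𝓝[≠] 1) (𝓝 (-ρ / σ)) := by
  have hslope : ∀ s : ℝ, Tendsto (slope (fun l : ℝ => l ^ s) 1) (𝓝[≠] 1) (𝓝 s) := fun s => by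
    simpa using hasDerivAt_iff_tendsto_slope.1
      (Real.hasDerivAt_rpow_const (x := 1) (p := s) (Or.inl one_ne_zero))
  rw [neg_div, ← div_neg]
  refine ((hslope ρ).div (hslope σ).neg (neg_ne_zero.2 hσ)).congr' ?_
  filter_upwards [self_mem_nhdsWithin] with l (hl : l ≠ 1)
  change slope (fun l : ℝ => l ^ ρ) 1 l / -slope (fun l : ℝ => l ^ σ) 1 l = _
  rw [slope_def_field, slope_def_field, Real.one_rpow, Real.one_rpow, ← neg_div, neg_sub,
    div_div_div_cancel_right₀ (sub_ne_zero.2 hl)]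

theorem tendsto_of_forall_eventually_squeeze {ι κ : Type*} {F : Filter κ} [F.NeBot]
    {G : Filter ι} {f : ι → ℝ} {lo hi : κ → ι → ℝ} {a b : κ → ℝ} {A : ℝ}
    (ha : Tendsto a F (𝓝 A)) (hb : Tendsto b F (𝓝 A))
    (h : ∀ᶠ k in F, Tendsto (lo k) G (𝓝 (a k)) ∧ Tendsto (hi k) G (𝓝 (b k)) ∧
      ∀ᶠ x in G, f x ∈ Icc (lo k x) (hi k x)) :
    Tendsto f G (𝓝 A) := by
  refine tendsto_order.2 ⟨fun c hc => ?_, fun d hd => ?_⟩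
  · obtain ⟨k, ⟨hlo, -, hf⟩, hck⟩ := (h.and (ha.eventually (lt_mem_nhds hc))).exists
    filter_upwards [hlo.eventually (lt_mem_nhds hck), hf] with x hx hfx
    exact hx.trans_le hfx.1
  · obtain ⟨k, ⟨-, hhi, hf⟩, hdk⟩ := (h.and (hb.eventually (gt_mem_nhds hd))).exists
    filter_upwards [hhi.eventually (gt_mem_nhds hdk), hf] with x hx hfx
    exact hfx.2.trans_lt hx

theorem stmt_13_general (ν : Measure ℝ)
    (α : ℝ) (hα0 : 0 < α)
    (cp : ℝ) (hcp : 0 < cp)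
    (g : ℝ → ℝ) (hgpos : ∀ x, 0 < x → 0 < g x)
    (hgRV : ∀ c : ℝ, 0 < c → Filter.Tendsto (fun x => g (c * x) / g x)
      (nhdsWithin 0 (Set.Ioi 0)) (nhds (c ^ (-α))))
    (htail : Filter.Tendsto (fun x => (ν (Set.Ioi x)).toReal / g x)
      (nhdsWithin 0 (Set.Ioi 0)) (nhds cp))
    (p : ℝ) (hp : α < p) :
    Filter.Tendsto
      (fun ε => (∫⁻ y in Set.Ioc (0:ℝ) ε, ENNReal.ofReal (y ^ p) ∂ν).toReal /
        (ε ^ p * (ν (Set.Ioi ε)).toReal))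
      (nhdsWithin 0 (Set.Ioi 0)) (nhds (α / (p - α))) := by
  have hU : IsRegularlyVaryingAtZero (fun x => ν.real (Ioi x)) (-α) :=
    IsRegularlyVaryingAtZero.of_tendsto_div hgRV (fun x hx => (hgpos x hx).ne') htail hcp.ne'
  have hpos : ∀ᶠ x in 𝓝[>] 0, 0 < ν.real (Ioi x) := by
    filter_upwards [htail.eventually (lt_mem_nhds hcp), self_mem_nhdsWithin]
      with x hx (hx0 : 0 < x)
    exact (div_pos_iff_of_pos_right (hgpos x hx0)).1 hx
  have hL : Tendsto (fun l : ℝ => (l ^ (-α) - 1) / (1 - l ^ p * l ^ (-α))) (𝓝[<] 1)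
      (𝓝 (α / (p - α))) := by
    have h := (tendsto_rpow_sub_one_div_one_sub_rpow (ρ := -α) (sub_ne_zero.2 hp.ne')).mono_left
      (nhdsLT_le_nhdsNE 1)
    rw [neg_neg] at h
    refine h.congr' ?_
    filter_upwards [Ioo_mem_nhdsLT one_pos] with l hl
    rw [sub_eq_add_neg p α, Real.rpow_add hl.1]
  have hlpL := ((Real.continuousAt_rpow_const 1 p (Or.inl one_ne_zero)).tendsto.mono_left
    nhdsWithin_le_nhds).mul hL
  rw [Real.one_rpow, one_mul] at hlpL
  refine tendsto_of_forall_eventually_squeeze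
    (lo := fun l x => l ^ p * ∑' n : ℕ, (l ^ p) ^ n * shellRatio ν l x n)
    (hi := fun l x => ∑' n : ℕ, (l ^ p) ^ n * shellRatio ν l x n) hlpL hL ?_
  filter_upwards [Ioo_mem_nhdsLT one_pos] with l ⟨hl0, hl1⟩
  have hrl : l ^ p * l ^ (-α) < 1 := by
    rw [← Real.rpow_add hl0]
    exact Real.rpow_lt_one hl0.le hl1 (by linarith)
  have hS := tendsto_tsum_shellRatio hU hpos hl0 hl1.le (Real.rpow_pos_of_pos hl0 p) hrl
  exact ⟨hS.const_mul _, hS,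
    eventually_lintegral_rpow_div_mem_Icc hU hpos hl0 hl1 (hα0.trans hp).le hrl⟩

/-- Karamata-type consequence: if `ν((x,∞)) ∼ c₊ g(x)` as `x ↓ 0` with `g` regularly varying
at `0` of index `-α`, then for every `p > α` with `∫_{(0,1]} y^p ν(dy) < ∞`,
`∫_{(0,ε]} y^p ν(dy) / (ε^p ν((ε,∞))) → α/(p-α)` as `ε ↓ 0`. -/
theorem stmt_13 (ν : Measure ℝ)
    (hν0 : ν {0} = 0)
    (hν2 : (∫⁻ y, ENNReal.ofReal (min 1 (y ^ 2)) ∂ν) < ⊤)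
    (α : ℝ) (hα0 : 0 < α) (hα2 : α < 2)
    (cp : ℝ) (hcp : 0 < cp)
    (g : ℝ → ℝ) (hgpos : ∀ x, 0 < x → 0 < g x)
    (hgRV : ∀ c : ℝ, 0 < c → Filter.Tendsto (fun x => g (c * x) / g x)
      (nhdsWithin 0 (Set.Ioi 0)) (nhds (c ^ (-α))))
    (htail : Filter.Tendsto (fun x => (ν (Set.Ioi x)).toReal / g x)
      (nhdsWithin 0 (Set.Ioi 0)) (nhds cp))
    (p : ℝ) (hp : α < p)
    (hmom : (∫⁻ y in Set.Ioc (0:ℝ) 1, ENNReal.ofReal (y ^ p) ∂ν) < ⊤) :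
    Filter.Tendsto
      (fun ε => (∫⁻ y in Set.Ioc (0:ℝ) ε, ENNReal.ofReal (y ^ p) ∂ν).toReal /
        (ε ^ p * (ν (Set.Ioi ε)).toReal))
      (nhdsWithin 0 (Set.Ioi 0)) (nhds (α / (p - α))) :=
  stmt_13_general ν α hα0 cp hcp g hgpos hgRV htail p hp
end

section
/- Let m_2, m_3, m_4 be real numbers such that m_k = ∫ y^k ν(dy) for k = 2, 3, 4 for some finite positive measure ν on ℝ, and assume m_4 > 0. Then min { ν̄(ℝ) : ν̄ a finite positive measure on ℝ with ∫ y² ν̄(dy) = m_2, ∫ y³ ν̄(dy) = m_3, ∫ y⁴ ν̄(dy) = m_4 } = m_2² / m_4, and the minimum is attained. -/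
/-!
By Cauchy–Schwarz, `m₂² = (∫ 1 · y² dν̄)² ≤ ν̄(ℝ) · m₄`, so every admissible `ν̄` has mass at least
`m₂² / m₄`. Cauchy–Schwarz applied to `ν` itself gives `m₃² ≤ m₂ m₄`, and this is exactly what makes
both weights of the two-point measure `p δ_a + q δ_{-a}` with `a² = m₄ / m₂`, `p + q = m₂² / m₄`,
`(p - q) a³ = m₃` nonnegative; that measure has the prescribed moments and the minimal mass.
-/

open MeasureTheory Filter Set
open scoped ENNReal

section CauchySchwarz

variable {α : Type*} [MeasurableSpace α] {μ : Measure α}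

theorem sq_integral_mul_le_integral_sq_mul_integral_sq {f g : α → ℝ}
    (hf : Integrable (fun x ↦ f x ^ 2) μ) (hg : Integrable (fun x ↦ g x ^ 2) μ)
    (hfg : Integrable (fun x ↦ f x * g x) μ) :
    (∫ x, f x * g x ∂μ) ^ 2 ≤ (∫ x, f x ^ 2 ∂μ) * ∫ x, g x ^ 2 ∂μ := by
  have hquad : ∀ t : ℝ, 0 ≤ (∫ x, g x ^ 2 ∂μ) * (t * t) + (2 * ∫ x, f x * g x ∂μ) * t
      + ∫ x, f x ^ 2 ∂μ := by
    intro t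
    have hexpand : ∫ x, (t * g x + f x) ^ 2 ∂μ
        = (∫ x, g x ^ 2 ∂μ) * (t * t) + (2 * ∫ x, f x * g x ∂μ) * t + ∫ x, f x ^ 2 ∂μ := by
      have hg' := hg.const_mul (t ^ 2)
      have hfg' := hfg.const_mul (2 * t)
      have hsum : Integrable (fun x ↦ t ^ 2 * g x ^ 2 + 2 * t * (f x * g x)) μ := hg'.add hfg'
      calc ∫ x, (t * g x + f x) ^ 2 ∂μ
          = ∫ x, t ^ 2 * g x ^ 2 + 2 * t * (f x * g x) + f x ^ 2 ∂μ :=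
            integral_congr_ae (Eventually.of_forall fun x ↦ by ring)
        _ = _ := by
            rw [integral_add hsum hf, integral_add hg' hfg', integral_const_mul,
              integral_const_mul]
            ring
    exact hexpand ▸ integral_nonneg fun x ↦ sq_nonneg _
  have := discrim_le_zero hquad
  rw [discrim] at this
  nlinarith

end CauchySchwarz

section Moments

variable {μ : Measure ℝ}

theorem sq_integral_pow_add_le (j k : ℕ) (hj : Integrable (fun y : ℝ ↦ y ^ (2 * j)) μ)
    (hk : Integrable (fun y : ℝ ↦ y ^ (2 * k)) μ) (hjk : Integrable (fun y : ℝ ↦ y ^ (j + k)) μ) :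
    (∫ y, y ^ (j + k) ∂μ) ^ 2 ≤ (∫ y, y ^ (2 * j) ∂μ) * ∫ y, y ^ (2 * k) ∂μ := by
  simp only [pow_add, pow_mul'] at hj hk hjk ⊢
  exact sq_integral_mul_le_integral_sq_mul_integral_sq hj hk hjk

theorem sq_integral_pow_three_le (h2 : Integrable (fun y : ℝ ↦ y ^ 2) μ)
    (h3 : Integrable (fun y : ℝ ↦ y ^ 3) μ) (h4 : Integrable (fun y : ℝ ↦ y ^ 4) μ) :
    (∫ y, y ^ 3 ∂μ) ^ 2 ≤ (∫ y, y ^ 2 ∂μ) * ∫ y, y ^ 4 ∂μ :=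
  sq_integral_pow_add_le 1 2 h2 h4 h3

theorem sq_integral_sq_le_measureReal_mul [IsFiniteMeasure μ]
    (h2 : Integrable (fun y : ℝ ↦ y ^ 2) μ) (h4 : Integrable (fun y : ℝ ↦ y ^ 4) μ) :
    (∫ y, y ^ 2 ∂μ) ^ 2 ≤ μ.real univ * ∫ y, y ^ 4 ∂μ := by
  have := sq_integral_pow_add_le (μ := μ) 0 2 (by simp) h4 (by simpa using h2)
  simpa using this

theorem integral_sq_pos_of_integral_pow_four_pos (h2 : Integrable (fun y : ℝ ↦ y ^ 2) μ)
    (h4 : 0 < ∫ y, y ^ 4 ∂μ) : 0 < ∫ y, y ^ 2 ∂μ := by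
  refine (integral_nonneg fun y ↦ sq_nonneg y).lt_of_ne fun h ↦ h4.ne' ?_
  have hsq : (fun y : ℝ ↦ y ^ 2) =ᵐ[μ] 0 :=
    (integral_eq_zero_iff_of_nonneg (fun y ↦ sq_nonneg y) h2).mp h.symm
  have hfour : (fun y : ℝ ↦ y ^ 4) =ᵐ[μ] 0 := by
    filter_upwards [hsq] with y hy
    simp only [Pi.zero_apply] at hy ⊢
    rw [show y ^ 4 = (y ^ 2) ^ 2 by ring, hy, zero_pow two_ne_zero]
  simp [integral_congr_ae hfour]

end Moments

section TwoPoint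

noncomputable def twoPointMeasure (p q a : ℝ) : Measure ℝ :=
  ENNReal.ofReal p • Measure.dirac a + ENNReal.ofReal q • Measure.dirac (-a)

variable (p q a : ℝ)

instance : IsFiniteMeasure (twoPointMeasure p q a) :=
  ⟨by simp [twoPointMeasure, ENNReal.add_lt_top]⟩

theorem integrable_twoPointMeasure (f : ℝ → ℝ) : Integrable f (twoPointMeasure p q a) :=
  ((integrable_dirac enorm_lt_top).smul_measure ENNReal.ofReal_ne_top).add_measure
    ((integrable_dirac enorm_lt_top).smul_measure ENNReal.ofReal_ne_top)

variable {p q}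

theorem twoPointMeasure_univ (hp : 0 ≤ p) (hq : 0 ≤ q) :
    twoPointMeasure p q a univ = ENNReal.ofReal (p + q) := by
  simp [twoPointMeasure, ENNReal.ofReal_add hp hq]

theorem integral_twoPointMeasure (hp : 0 ≤ p) (hq : 0 ≤ q) (f : ℝ → ℝ) :
    ∫ y, f y ∂twoPointMeasure p q a = p * f a + q * f (-a) := by
  rw [twoPointMeasure, integral_add_measure
      ((integrable_dirac enorm_lt_top).smul_measure ENNReal.ofReal_ne_top)
      ((integrable_dirac enorm_lt_top).smul_measure ENNReal.ofReal_ne_top),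
    integral_smul_measure, integral_smul_measure, integral_dirac, integral_dirac,
    ENNReal.toReal_ofReal hp, ENNReal.toReal_ofReal hq, smul_eq_mul, smul_eq_mul]

end TwoPoint

theorem exists_twoPointMeasure_moments {m₂ m₃ m₄ : ℝ} (hm₂ : 0 < m₂) (hm₄ : 0 < m₄)
    (hm₃ : m₃ ^ 2 ≤ m₂ * m₄) :
    ∃ p q a : ℝ, 0 ≤ p ∧ 0 ≤ q ∧ p + q = m₂ ^ 2 / m₄ ∧
      (∫ y, y ^ 2 ∂twoPointMeasure p q a) = m₂ ∧ (∫ y, y ^ 3 ∂twoPointMeasure p q a) = m₃ ∧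
      (∫ y, y ^ 4 ∂twoPointMeasure p q a) = m₄ := by
  set a := √(m₄ / m₂)
  have ha : 0 < a := Real.sqrt_pos.mpr (by positivity)
  have ha2 : a ^ 2 = m₄ / m₂ := Real.sq_sqrt (by positivity)
  set c := m₂ ^ 2 / m₄
  set d := m₃ / a ^ 3
  have hm₂a2 : m₂ * a ^ 2 = m₄ := by rw [ha2]; field_simp
  have hca2 : c * a ^ 2 = m₂ := by simp only [c, ha2]; field_simp
  have hda3 : d * a ^ 3 = m₃ := div_mul_cancel₀ m₃ (by positivity)
  have hdc : |d| ≤ c := by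
    have hm₃a : |m₃| ≤ m₂ * a := abs_le_of_sq_le_sq (by rw [mul_pow, ha2]; field_simp; nlinarith)
      (by positivity)
    rw [abs_div, abs_of_pos (by positivity : (0 : ℝ) < a ^ 3), div_le_iff₀ (by positivity)]
    nlinarith
  have hp : 0 ≤ (c + d) / 2 := by linarith [neg_abs_le d]
  have hq : 0 ≤ (c - d) / 2 := by linarith [le_abs_self d]
  refine ⟨(c + d) / 2, (c - d) / 2, a, hp, hq, by ring, ?_, ?_, ?_⟩ <;>
    rw [integral_twoPointMeasure _ hp hq]
  · linear_combination hca2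
  · linear_combination hda3
  · linear_combination a ^ 2 * hca2 + hm₂a2

theorem stmt_16_general (ν : Measure ℝ)
    (hint : ∀ k, 2 ≤ k → k ≤ 4 → MeasureTheory.Integrable (fun y : ℝ => y ^ k) ν)
    (m₂ m₃ m₄ : ℝ) (h₂ : m₂ = ∫ y, y ^ 2 ∂ν) (h₃ : m₃ = ∫ y, y ^ 3 ∂ν)
    (h₄ : m₄ = ∫ y, y ^ 4 ∂ν) (hm₄ : 0 < m₄) :
    IsLeast
      {mass : ℝ | ∃ νb : Measure ℝ, IsFiniteMeasure νb ∧
        νb Set.univ = ENNReal.ofReal mass ∧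
        (∀ k, 2 ≤ k → k ≤ 4 → MeasureTheory.Integrable (fun y : ℝ => y ^ k) νb) ∧
        (∫ y, y ^ 2 ∂νb) = m₂ ∧ (∫ y, y ^ 3 ∂νb) = m₃ ∧ (∫ y, y ^ 4 ∂νb) = m₄}
      (m₂ ^ 2 / m₄) := by
  have hm₂ : 0 < m₂ :=
    h₂ ▸ integral_sq_pos_of_integral_pow_four_pos (hint 2 le_rfl (by norm_num)) (h₄ ▸ hm₄)
  have hm₃ : m₃ ^ 2 ≤ m₂ * m₄ := h₂ ▸ h₃ ▸ h₄ ▸ sq_integral_pow_three_le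
    (hint 2 le_rfl (by norm_num)) (hint 3 (by norm_num) (by norm_num)) (hint 4 (by norm_num) le_rfl)
  obtain ⟨p, q, a, hp, hq, hpq, e₂, e₃, e₄⟩ := exists_twoPointMeasure_moments hm₂ hm₄ hm₃
  refine ⟨⟨twoPointMeasure p q a, inferInstance, hpq ▸ twoPointMeasure_univ a hp hq,
    fun _ _ _ ↦ integrable_twoPointMeasure p q a _, e₂, e₃, e₄⟩, ?_⟩
  rintro mass ⟨μ, hμ, hmass, hμint, e₂, -, e₄⟩
  have hcs := sq_integral_sq_le_measureReal_mul (hμint 2 le_rfl (by norm_num))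
    (hμint 4 (by norm_num) le_rfl)
  rw [e₂, e₄, measureReal_def, hmass, ENNReal.toReal_ofReal'] at hcs
  rw [div_le_iff₀ hm₄]
  rcases le_or_gt 0 mass with hmass₀ | hmass₀
  · rwa [max_eq_left hmass₀] at hcs
  · rw [max_eq_right hmass₀.le, zero_mul] at hcs
    exact absurd hcs (not_le.mpr (by positivity))

/-- Minimal intensity for the truncated moment problem with prescribed moments of orders
`2, 3, 4`: if `m_k = ∫ y^k ν(dy)`, `k = 2,3,4`, for some finite positive measure `ν` and
`m₄ > 0`, then the minimum of `ν̄(ℝ)` over finite positive measures `ν̄` matching these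
moments equals `m₂²/m₄`, and it is attained. -/
theorem stmt_16 (ν : Measure ℝ) (hν : IsFiniteMeasure ν)
    (hint : ∀ k, 2 ≤ k → k ≤ 4 → MeasureTheory.Integrable (fun y : ℝ => y ^ k) ν)
    (m₂ m₃ m₄ : ℝ) (h₂ : m₂ = ∫ y, y ^ 2 ∂ν) (h₃ : m₃ = ∫ y, y ^ 3 ∂ν)
    (h₄ : m₄ = ∫ y, y ^ 4 ∂ν) (hm₄ : 0 < m₄) :
    IsLeast
      {mass : ℝ | ∃ νb : Measure ℝ, IsFiniteMeasure νb ∧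
        νb Set.univ = ENNReal.ofReal mass ∧
        (∀ k, 2 ≤ k → k ≤ 4 → MeasureTheory.Integrable (fun y : ℝ => y ^ k) νb) ∧
        (∫ y, y ^ 2 ∂νb) = m₂ ∧ (∫ y, y ^ 3 ∂νb) = m₃ ∧ (∫ y, y ^ 4 ∂νb) = m₄}
      (m₂ ^ 2 / m₄) :=
  stmt_16_general ν hint m₂ m₃ m₄ h₂ h₃ h₄ hm₄
end
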